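/- arXiv:1311.0293 — 6 statements merged into one kernel-verified Lean document; each statement's English description precedes it below -/
import Mathlib

section
/- Every valid black pebbling sequence of the complete binary tree T^h_2 with h levels contains at least one configuration with at least h pebbles. -/
/-- Node `i` is a node of the complete binary tree `T^h_2` (heap numbering). -/
def isNode (h i : ℕ) : Prop := 1 ≤ i ∧ i < 2 ^ h

/-- Node `i` is a leaf of `T^h_2`. -/
def isLeafNode (h i : ℕ) : Prop := 2 ^ (h - 1) ≤ i ∧ i < 2 ^ h

/-- Node `i` is an internal node of `T^h_2`. -/
def isInternalNode (h i : ℕ) : Prop := 1 ≤ i ∧ i < 2 ^ (h - 1)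

/-- A single move of the black pebble game on `T^h_2`: place a pebble on a leaf;
or, if both children of an internal node `i` are pebbled, place a pebble on `i`
while simultaneously removing the pebbles from any subset of its children;
or remove a pebble. -/
def BlackMove (h : ℕ) (C C' : Finset ℕ) : Prop :=
  (∃ i, isLeafNode h i ∧ C' = insert i C) ∨
  (∃ i S, isInternalNode h i ∧ 2 * i ∈ C ∧ 2 * i + 1 ∈ C ∧
    S ⊆ ({2 * i, 2 * i + 1} : Finset ℕ) ∧ C' = insert i (C \ S)) ∨
  (∃ i, i ∈ C ∧ C' = C.erase i)

/-- A valid black pebbling sequence of `T^h_2`: starts with the empty configuration,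
ends with just a pebble on the root (node 1), and each configuration follows from
the previous one by a legal move. -/
def ValidBlackSeq (h : ℕ) (L : List (Finset ℕ)) : Prop :=
  L.head? = some ∅ ∧ L.getLast? = some {1} ∧ List.Chain' (BlackMove h) L

/-- A configuration `C` blocks the root path of node `l` if some ancestor of `l`
(including `l` itself) carries a pebble. -/
def Blocked (C : Finset ℕ) (l : ℕ) : Prop := ∃ e, 1 ≤ l / 2 ^ e ∧ l / 2 ^ e ∈ C

/-- All leaf paths are blocked. -/
def AllBlocked (h : ℕ) (C : Finset ℕ) : Prop := ∀ l, isLeafNode h l → Blocked C l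

/-- In a chain where the property fails at the head and holds at the last element,
some step turns the property from false to true. -/
lemma exists_transition {α : Type*} {R : α → α → Prop} {P : α → Prop} :
    ∀ (L : List α) (a b : α), List.Chain' R L → L.head? = some a → L.getLast? = some b →
      ¬ P a → P b → ∃ x y, R x y ∧ ¬ P x ∧ P y ∧ y ∈ L := by
  intro L
  induction L with
  | nil => intro a b _ ha _ _ _; simp at ha
  | cons x L ih =>
    intro a b hchain ha hb hpa hpb
    simp only [List.head?_cons, Option.some.injEq] at ha
    subst ha
    cases L with
    | nil =>
      simp only [List.getLast?_singleton, Option.some.injEq] at hb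
      subst hb; exact absurd hpb hpa
    | cons y L' =>
      replace hchain := List.isChain_cons_cons.mp hchain
      by_cases hpy : P y
      · exact ⟨_, y, hchain.1, hpa, hpy, by simp⟩
      · rw [List.getLast?_cons_cons] at hb
        obtain ⟨u, v, h1, h2, h3, h4⟩ := ih y b hchain.2 (by simp) hb hpy hpb
        exact ⟨u, v, h1, h2, h3, by simp [h4]⟩

lemma rank_eq {a x : ℕ} (h1 : 2 ^ a ≤ x) (h2 : x < 2 ^ a * 2) : Nat.log 2 x = a :=
  Nat.log_eq_of_pow_le_of_lt_pow h1 (by rw [pow_succ]; omega)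

/-- Every valid black pebbling sequence of `T^h_2` contains a configuration
with at least `h` pebbles. -/
theorem black_pebbling_lower_bound (h : ℕ) (hh : 1 ≤ h)
    (L : List (Finset ℕ)) (hL : ValidBlackSeq h L) :
    ∃ C ∈ L, h ≤ C.card := by
  classical
  obtain ⟨hhead, hlast, hchain⟩ := hL
  have hstart : ¬ AllBlocked h (∅ : Finset ℕ) := by
    intro H
    obtain ⟨e, _, h2⟩ := H (2 ^ (h - 1))
      ⟨le_rfl, Nat.pow_lt_pow_right one_lt_two (by omega)⟩
    simp at h2
  have hend : AllBlocked h ({1} : Finset ℕ) := by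
    intro l hl
    have h3 : 2 ^ h = 2 ^ (h - 1) * 2 := by rw [← pow_succ]; congr 1; omega
    have hdiv : l / 2 ^ (h - 1) = 1 := by
      have h1 : 2 ^ (h - 1) ≤ l := hl.1
      have h2 : l < 2 ^ h := hl.2
      refine Nat.div_eq_of_lt_le (by omega) (by omega)
    exact ⟨h - 1, by omega, by simp [hdiv]⟩
  obtain ⟨C, C', hmove, hnb, hb, hmem⟩ :=
    exists_transition L ∅ {1} hchain hhead hlast hstart hend
  refine ⟨C', hmem, ?_⟩
  rcases hmove with ⟨l, hleaf, rfl⟩ | ⟨i, S, hint, h2i, h2i1, hS, rfl⟩ | ⟨i, hi, rfl⟩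
  · -- Main case: a leaf `l` was just placed.
    have hex : ∃ m, isLeafNode h m ∧ ¬ Blocked C m := by
      by_contra hcon
      push_neg at hcon
      exact hnb (fun m hm => hcon m hm)
    obtain ⟨m, hm, hmb⟩ := hex
    have hpow2 : 2 ^ h = 2 ^ (h - 1) * 2 := by rw [← pow_succ]; congr 1; omega
    have hml : m = l := by
      obtain ⟨e0, he01, he02⟩ := hb m hm
      rcases Finset.mem_insert.mp he02 with hx | hx
      · rcases Nat.eq_zero_or_pos e0 with rfl | hep
        · simpa using hx
        · exfalso
          have hle : m / 2 ^ e0 ≤ m / 2 := by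
            rw [show e0 = 1 + (e0 - 1) from by omega, pow_add, pow_one,
              ← Nat.div_div_eq_div_mul]
            exact Nat.div_le_self _ _
          have hm2 : m / 2 < 2 ^ (h - 1) := by
            have := hm.2
            omega
          have := hleaf.1
          omega
      · exact absurd ⟨e0, he01, hx⟩ hmb
    subst hml
    have hm1 : 1 ≤ m := le_trans Nat.one_le_two_pow hm.1
    -- Key fact: no proper ancestor of m carries a pebble in insert m C.
    have K : ∀ e, 1 ≤ e → 1 ≤ m / 2 ^ e → m / 2 ^ e ∉ insert m C := by
      intro e he h1 hmemx
      rcases Finset.mem_insert.mp hmemx with hx | hx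
      · have hle : m / 2 ^ e ≤ m / 2 := by
          rw [show e = 1 + (e - 1) from by omega, pow_add, pow_one,
            ← Nat.div_div_eq_div_mul]
          exact Nat.div_le_self _ _
        have : m / 2 < m := Nat.div_lt_self (by omega) (by norm_num)
        omega
      · exact hmb ⟨e, h1, hx⟩
    -- Path nodes and siblings.
    set q : ℕ → ℕ := fun j => m / 2 ^ j with hq
    have hqsucc : ∀ j, q (j + 1) = q j / 2 := by
      intro j
      simp only [hq]
      rw [Nat.div_div_eq_div_mul, ← pow_succ]
    have hqlow : ∀ j, j ≤ h - 1 → 2 ^ (h - 1 - j) ≤ q j := by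
      intro j hj
      have hx : 2 ^ (h - 1 - j) * 2 ^ j ≤ m := by
        rw [← pow_add, show h - 1 - j + j = h - 1 from by omega]; exact hm.1
      exact (Nat.le_div_iff_mul_le (pow_pos two_pos j)).mpr hx
    have hqhigh : ∀ j, j ≤ h → q j < 2 ^ (h - j) := by
      intro j hj
      have hx : m < 2 ^ (h - j) * 2 ^ j := by
        rw [← pow_add, show h - j + j = h from by omega]; exact hm.2
      exact Nat.div_lt_of_lt_mul (by rw [Nat.mul_comm]; exact hx)
    set w : ℕ → ℕ := fun j => 2 * q j + 1 - q (j - 1) % 2 with hw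
    have hwfacts : ∀ j, 1 ≤ j → j ≤ h - 1 →
        (w j / 2 = q j ∧ w j ≠ q (j - 1) ∧ 2 ^ (h - j) ≤ w j ∧ w j < 2 ^ (h - j) * 2) := by
      intro j hj1 hj2
      have hs : q j = q (j - 1) / 2 := by
        have := hqsucc (j - 1)
        rwa [show j - 1 + 1 = j from by omega] at this
      have hmod := Nat.div_add_mod (q (j - 1)) 2
      have hmodlt : q (j - 1) % 2 < 2 := Nat.mod_lt _ two_pos
      have hlow := hqlow j hj2
      have hhigh := hqhigh j (by omega)
      have hpow : 2 ^ (h - 1 - j) * 2 = 2 ^ (h - j) := by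
        rw [← pow_succ]; congr 1; omega
      simp only [hw]
      refine ⟨by omega, by omega, by omega, by omega⟩
    -- For each level, find a pebble in the sibling subtree.
    have hwit : ∀ j, ∃ c, 1 ≤ j → j ≤ h - 1 → c ≤ j - 1 ∧ w j * 2 ^ c ∈ insert m C := by
      intro j
      by_cases hj : 1 ≤ j ∧ j ≤ h - 1
      · obtain ⟨hj1, hj2⟩ := hj
        obtain ⟨hwd, hwne, hlo, hhi⟩ := hwfacts j hj1 hj2
        have hlf : isLeafNode h (w j * 2 ^ (j - 1)) := by
          constructor
          · calc 2 ^ (h - 1) = 2 ^ (h - j) * 2 ^ (j - 1) := by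
                  rw [← pow_add]; congr 1; omega
            _ ≤ w j * 2 ^ (j - 1) := Nat.mul_le_mul_right _ hlo
          · calc w j * 2 ^ (j - 1) < (2 ^ (h - j) * 2) * 2 ^ (j - 1) :=
                  (Nat.mul_lt_mul_right (pow_pos two_pos _)).mpr hhi
            _ = 2 ^ h := by
                  rw [Nat.mul_assoc, Nat.mul_comm 2 (2 ^ (j - 1)), ← pow_succ, ← pow_add]
                  congr 1; omega
        obtain ⟨e, he1, he2⟩ := hb _ hlf
        have hele : e ≤ j - 1 := by
          by_contra hec
          push_neg at hec
          have hE : (2 : ℕ) ^ e = 2 ^ (j - 1) * 2 * 2 ^ (e - j) := by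
            rw [show (2:ℕ) ^ (j - 1) * 2 = 2 ^ j from by rw [← pow_succ]; congr 1; omega,
              ← pow_add]
            congr 1
            omega
          have heq : w j * 2 ^ (j - 1) / 2 ^ e = m / 2 ^ e := by
            conv_lhs => rw [hE]
            rw [← Nat.div_div_eq_div_mul, ← Nat.div_div_eq_div_mul,
              Nat.mul_div_cancel _ (pow_pos two_pos _), hwd]
            simp only [hq]
            rw [Nat.div_div_eq_div_mul, ← pow_add, show j + (e - j) = e from by omega]
          rw [heq] at he1 he2
          exact K e (by omega) he1 he2
        obtain ⟨d, hd⟩ : ∃ d, j - 1 = d + e := ⟨j - 1 - e, by omega⟩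
        refine ⟨d, fun _ _ => ⟨by omega, ?_⟩⟩
        have hcalc : w j * 2 ^ (j - 1) / 2 ^ e = w j * 2 ^ d := by
          rw [hd, pow_add, ← Nat.mul_assoc, Nat.mul_div_cancel _ (pow_pos two_pos _)]
        rw [hcalc] at he2
        exact he2
      · exact ⟨0, fun h1 h2 => absurd ⟨h1, h2⟩ hj⟩
    choose c hc using hwit
    set F : ℕ → ℕ := fun j => if j = 0 then m else w j * 2 ^ (c j) with hF
    have hrankm : Nat.log 2 m = h - 1 := by
      apply rank_eq hm.1
      have := hm.2
      omega
    have hrankj : ∀ j, 1 ≤ j → j ≤ h - 1 →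
        Nat.log 2 (w j * 2 ^ (c j)) = (h - j) + c j := by
      intro j h1 h2
      obtain ⟨_, _, hlo, hhi⟩ := hwfacts j h1 h2
      apply rank_eq
      · rw [pow_add]; exact Nat.mul_le_mul_right _ hlo
      · calc w j * 2 ^ (c j) < (2 ^ (h - j) * 2) * 2 ^ (c j) :=
              (Nat.mul_lt_mul_right (pow_pos two_pos _)).mpr hhi
        _ = 2 ^ (h - j + c j) * 2 := by ring
    have hkey : ∀ a b, a < b → b ≤ h - 1 → F a ≠ F b := by
      intro a b hab hbh heqF
      have hb1 : 1 ≤ b := by omega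
      obtain ⟨hwd_b, hwne_b, hlo_b, hhi_b⟩ := hwfacts b hb1 hbh
      have hcb := (hc b hb1 hbh).1
      rcases Nat.eq_zero_or_pos a with rfl | ha1
      · simp only [hF, if_pos rfl, if_neg (by omega : ¬ b = 0)] at heqF
        have hr := hrankj b hb1 hbh
        rw [← heqF, hrankm] at hr
        have hcb' : c b = b - 1 := by omega
        have hdiv : m / 2 ^ (b - 1) = w b := by
          rw [heqF, hcb', Nat.mul_div_cancel _ (pow_pos two_pos _)]
        exact hwne_b (by simp only [hq]; rw [hdiv])
      · obtain ⟨hwd_a, hwne_a, hlo_a, hhi_a⟩ := hwfacts a ha1 (by omega)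
        have hca := (hc a ha1 (by omega)).1
        simp only [hF, if_neg (by omega : ¬ a = 0), if_neg (by omega : ¬ b = 0)] at heqF
        have hra := hrankj a ha1 (by omega)
        have hrb := hrankj b hb1 hbh
        rw [heqF] at hra
        rw [hrb] at hra
        have hcc : c b = c a + (b - a) := by omega
        have hwb : w b = w a / 2 ^ (b - a) := by
          have h1 : w b * 2 ^ (c b) / 2 ^ (c b) = w b :=
            Nat.mul_div_cancel _ (pow_pos two_pos _)
          rw [← h1, ← heqF, hcc, pow_add, ← Nat.div_div_eq_div_mul,
            Nat.mul_div_cancel _ (pow_pos two_pos _)]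
        have hwb2 : w a / 2 ^ (b - a) = m / 2 ^ (b - 1) := by
          obtain ⟨d, hd⟩ : ∃ d, b - a = 1 + d := ⟨b - a - 1, by omega⟩
          rw [hd, pow_add, pow_one, ← Nat.div_div_eq_div_mul, hwd_a]
          simp only [hq]
          rw [Nat.div_div_eq_div_mul, ← pow_add, show a + d = b - 1 from by omega]
        exact hwne_b (by simp only [hq]; rw [hwb, hwb2])
    have hmaps : ∀ a ∈ Finset.range h, F a ∈ insert m C := by
      intro a ha
      simp only [Finset.mem_range] at ha
      by_cases h0 : a = 0
      · simp [hF, h0]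
      · simp only [hF, if_neg h0]
        exact (hc a (by omega) (by omega)).2
    have hinj : Set.InjOn F ↑(Finset.range h) := by
      intro a ha b hb' heq
      simp only [Finset.coe_range, Set.mem_Iio] at ha hb'
      by_contra hne
      rcases Nat.lt_or_ge a b with hab | hab
      · exact hkey a b hab (by omega) heq
      · exact hkey b a (by omega) (by omega) heq.symm
    have := Finset.card_le_card_of_injOn F hmaps hinj
    simpa using this
  · -- Internal move cannot create the first blocking configuration.
    exfalso; apply hnb
    intro m hm
    obtain ⟨e, he1, he2⟩ := hb m hm
    rcases Finset.mem_insert.mp he2 with hx | hx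
    · have hi1 : 1 ≤ i := hint.1
      have hi2 : i < 2 ^ (h - 1) := hint.2
      have hepos : 1 ≤ e := by
        rcases Nat.eq_zero_or_pos e with rfl | he
        · exfalso
          simp only [pow_zero, Nat.div_one] at hx
          have := hm.1
          omega
        · exact he
      have hdd : m / 2 ^ (e - 1) / 2 = i := by
        rw [Nat.div_div_eq_div_mul, ← pow_succ, show e - 1 + 1 = e from by omega]
        exact hx
      have hmod := Nat.div_add_mod (m / 2 ^ (e - 1)) 2
      have hmod2 : m / 2 ^ (e - 1) % 2 < 2 := Nat.mod_lt _ two_pos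
      refine ⟨e - 1, by omega, ?_⟩
      rcases (by omega : m / 2 ^ (e - 1) = 2 * i ∨ m / 2 ^ (e - 1) = 2 * i + 1) with hy | hy
      · rw [hy]; exact h2i
      · rw [hy]; exact h2i1
    · exact ⟨e, he1, (Finset.mem_sdiff.mp hx).1⟩
  · -- Erasing a pebble cannot create the first blocking configuration.
    exfalso; apply hnb
    intro m hm
    obtain ⟨e, he1, he2⟩ := hb m hm
    exact ⟨e, he1, Finset.mem_of_mem_erase he2⟩
end

section
/- There exists a valid black pebbling sequence of the complete binary tree T^h_2 with h levels in which every configuration has at most h pebbles. -/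
namespace BlackPebbleAux

/-- The pebbling strategy for the subtree of `i` with `k+1` levels, starting
from base configuration `B`: the list of successive configurations (after `B`),
ending with `insert i B`. -/
def seq : ℕ → ℕ → Finset ℕ → List (Finset ℕ)
  | 0, i, B => [insert i B]
  | k+1, i, B =>
      seq k (2*i) B ++ seq k (2*i+1) (insert (2*i) B) ++ [insert i B]

theorem seq_getLast? (k i : ℕ) (B : Finset ℕ) :
    (seq k i B).getLast? = some (insert i B) := by
  cases k with
  | zero => rfl
  | succ k => simp [seq]

theorem seq_ne_nil (k i : ℕ) (B : Finset ℕ) : seq k i B ≠ [] := by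
  cases k <;> simp [seq]

theorem cons_getLast? {α : Type*} {a : α} {l : List α} (h : l ≠ []) :
    (a :: l).getLast? = l.getLast? := by
  cases l with
  | nil => exact absurd rfl h
  | cons b t => exact List.getLast?_cons_cons

theorem seq_card (k i : ℕ) (B : Finset ℕ) :
    ∀ C ∈ seq k i B, C.card ≤ B.card + (k+1) := by
  induction k generalizing i B with
  | zero =>
    intro C hC
    simp only [seq, List.mem_singleton] at hC
    subst hC
    exact Finset.card_insert_le _ _
  | succ k ih =>
    intro C hC
    simp only [seq, List.mem_append, List.mem_singleton] at hC
    rcases hC with (hC | hC) | hC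
    · exact le_trans (ih _ _ _ hC) (by omega)
    · have h1 := ih _ _ _ hC
      have h2 : (insert (2*i) B).card ≤ B.card + 1 := Finset.card_insert_le _ _
      omega
    · subst hC
      have := Finset.card_insert_le i B
      omega

theorem chain_trans {α : Type*} {R : α → α → Prop} :
    ∀ {l1 : List α} {a b : α} {l2 : List α},
      List.Chain R a l1 → (a :: l1).getLast? = some b → List.Chain R b l2 →
      List.Chain R a (l1 ++ l2)
  | [], a, b, l2, _, hlast, h2 => by
      simp at hlast; subst hlast; simpa using h2
  | c :: t, a, b, l2, h1, hlast, h2 => by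
      obtain ⟨hac, hct⟩ := List.chain_cons.mp h1
      rw [List.getLast?_cons_cons] at hlast
      exact List.Chain.cons hac (chain_trans hct hlast h2)

theorem seq_chain (h : ℕ) :
    ∀ (k d i : ℕ) (B : Finset ℕ), d + (k+1) = h → 2^d ≤ i → i < 2^(d+1) →
      (∀ j ∈ B, j < i) → List.Chain (BlackMove h) B (seq k i B) := by
  intro k
  induction k with
  | zero =>
    intro d i B hd h1 h2 hB
    refine List.Chain.cons (Or.inl ⟨i, ⟨?_, ?_⟩, rfl⟩) List.Chain.nil
    · have hd1 : h - 1 = d := by omega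
      rw [hd1]; exact h1
    · have hd1 : h = d + 1 := by omega
      rw [hd1]; exact h2
  | succ k ih =>
    intro d i B hd h1 h2 hB
    have hi1 : 1 ≤ i := le_trans Nat.one_le_two_pow h1
    have hBlt : ∀ j ∈ B, j < 2*i := fun j hj => lt_of_lt_of_le (hB j hj) (by omega)
    have c1 : List.Chain (BlackMove h) B (seq k (2*i) B) := by
      refine ih (d+1) (2*i) B (by omega) ?_ ?_ hBlt
      · rw [pow_succ, mul_comm]; exact Nat.mul_le_mul_left 2 h1
      · rw [pow_succ, mul_comm]; omega
    set B1 : Finset ℕ := insert (2*i) B with hB1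
    have hB1lt : ∀ j ∈ B1, j < 2*i+1 := by
      intro j hj
      rcases Finset.mem_insert.mp hj with rfl | hj
      · omega
      · have := hB j hj; omega
    have c2 : List.Chain (BlackMove h) B1 (seq k (2*i+1) B1) := by
      refine ih (d+1) (2*i+1) B1 (by omega) ?_ ?_ hB1lt
      · rw [pow_succ, mul_comm]; omega
      · rw [pow_succ, mul_comm]
        have h2' : i + 1 ≤ 2^(d+1) := h2
        omega
    set B2 : Finset ℕ := insert (2*i+1) B1 with hB2
    have cmove : BlackMove h B2 (insert i B) := by
      refine Or.inr (Or.inl ⟨i, {2*i, 2*i+1}, ⟨hi1, ?_⟩, ?_, ?_, le_refl _, ?_⟩)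
      · have hle : d + 1 ≤ h - 1 := by omega
        calc i < 2^(d+1) := h2
          _ ≤ 2^(h-1) := Nat.pow_le_pow_right (by norm_num) hle
      · exact Finset.mem_insert.mpr (Or.inr (Finset.mem_insert_self _ _))
      · exact Finset.mem_insert_self _ _
      · congr 1
        ext j
        simp only [hB2, hB1, Finset.mem_sdiff, Finset.mem_insert, Finset.mem_singleton]
        constructor
        · intro hj
          have := hB j hj
          exact ⟨Or.inr (Or.inr hj), by omega⟩
        · rintro ⟨rfl | rfl | hj', hne⟩
          · exact absurd (Or.inr rfl) hne
          · exact absurd (Or.inl rfl) hne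
          · exact hj'
    have c3 : List.Chain (BlackMove h) B2 [insert i B] :=
      List.Chain.cons cmove List.Chain.nil
    have glast1 : (B :: seq k (2*i) B).getLast? = some B1 := by
      rw [cons_getLast? (seq_ne_nil _ _ _), seq_getLast?]
    have c12 : List.Chain (BlackMove h) B (seq k (2*i) B ++ seq k (2*i+1) B1) :=
      chain_trans c1 glast1 c2
    have glast2 : (B :: (seq k (2*i) B ++ seq k (2*i+1) B1)).getLast? = some B2 := by
      rw [cons_getLast? (by simp [seq_ne_nil]), List.getLast?_append, seq_getLast?]
      rfl
    have := chain_trans c12 glast2 c3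
    simpa [seq, List.append_assoc] using this

end BlackPebbleAux

/-- There is a valid black pebbling sequence of `T^h_2` in which every
configuration has at most `h` pebbles. -/
theorem black_pebbling_upper_bound (h : ℕ) (hh : 1 ≤ h) :
    ∃ L : List (Finset ℕ), ValidBlackSeq h L ∧ ∀ C ∈ L, C.card ≤ h := by
  refine ⟨∅ :: BlackPebbleAux.seq (h-1) 1 ∅, ⟨rfl, ?_, ?_⟩, ?_⟩
  · rw [BlackPebbleAux.cons_getLast? (BlackPebbleAux.seq_ne_nil _ _ _),
      BlackPebbleAux.seq_getLast?]
    simp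
  · show List.Chain (BlackMove h) ∅ (BlackPebbleAux.seq (h-1) 1 ∅)
    exact BlackPebbleAux.seq_chain h (h-1) 0 1 ∅ (by omega) (by norm_num) (by norm_num)
      (by simp)
  · intro C hC
    rcases List.mem_cons.mp hC with rfl | hC
    · simp
    · have := BlackPebbleAux.seq_card (h-1) 1 ∅ C hC
      simp only [Finset.card_empty] at this
      omega
end

section
/- Every deterministic thrifty branching program solving TEP^h_2(k) has at least k^h states. -/
/-- An input to the Tree Evaluation Problem `TEP^h_2(k)`: a value in `[k]` for each
of the `2^(h-1)` leaves (leaf `2^(h-1) + j` corresponds to index `j`), and a function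
`[k] × [k] → [k]` for each of the `2^(h-1) - 1` internal nodes (node `j + 1`
corresponds to index `j`). -/
abbrev TEPInput (h k : ℕ) : Type :=
  (Fin (2 ^ (h - 1)) → Fin k) × (Fin (2 ^ (h - 1) - 1) → Fin k → Fin k → Fin k)

/-- The value `v_i` attached by input `I` to leaf `i`. -/
def leafValAt {h k : ℕ} (I : TEPInput h k) (i : ℕ) : Fin k :=
  I.1 ⟨(i - 2 ^ (h - 1)) % 2 ^ (h - 1), Nat.mod_lt _ (Nat.two_pow_pos _)⟩

/-- The function `f_i` attached by input `I` to internal node `i`. -/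
def funcAt {h k : ℕ} (I : TEPInput h k) (i : ℕ) : Fin k → Fin k → Fin k :=
  if hlt : i - 1 < 2 ^ (h - 1) - 1 then I.2 ⟨i - 1, hlt⟩ else fun x _ => x

/-- The correct value `v_i^I` of node `i` of `T^h_2` under input `I`:
`v_i = f_i(v_{2i}, v_{2i+1})` for internal nodes, and the given leaf value for leaves. -/
def nodeVal (h k : ℕ) (I : TEPInput h k) (i : ℕ) : Fin k :=
  if hi : 1 ≤ i ∧ i < 2 ^ (h - 1) then
    funcAt I i (nodeVal h k I (2 * i)) (nodeVal h k I (2 * i + 1))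
  else leafValAt I i
termination_by 2 ^ h - i
decreasing_by
  · have h2 : 2 ^ (h - 1) ≤ 2 ^ h := Nat.pow_le_pow_right (by norm_num) (Nat.sub_le h 1)
    omega
  · have h2 : 2 ^ (h - 1) ≤ 2 ^ h := Nat.pow_le_pow_right (by norm_num) (Nat.sub_le h 1)
    omega

/-- A query label of a `k`-way branching program for `TEP^h_2(k)`: either a leaf
query `v_i` or an internal query `f_i(x, y)` with `x, y ∈ [k]`. -/
inductive BPQuery (k : ℕ) : Type where
  | leaf (i : ℕ) : BPQuery k
  | internal (i : ℕ) (x y : Fin k) : BPQuery k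

/-- The value of input `I` at a given query. -/
def queryVal {h k : ℕ} (I : TEPInput h k) : BPQuery k → Fin k
  | .leaf i => leafValAt I i
  | .internal i x y => funcAt I i x y

/-- Well-formedness of a query label: leaf queries address leaves and internal
queries address internal nodes. -/
def queryWF (h : ℕ) {k : ℕ} : BPQuery k → Prop
  | .leaf i => isLeafNode h i
  | .internal i _ _ => isInternalNode h i

/-- The query addresses node `i`. -/
def queriesNode {k : ℕ} : BPQuery k → ℕ → Prop
  | .leaf j, i => j = i
  | .internal j _ _, i => j = i

/-- The thrifty query of input `I` to node `i`: the leaf query `v_i` if `i` is a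
leaf, and `f_i(v_{2i}^I, v_{2i+1}^I)` if `i` is internal. -/
def thriftyQuery (h k : ℕ) (I : TEPInput h k) (i : ℕ) : BPQuery k :=
  if 1 ≤ i ∧ i < 2 ^ (h - 1) then
    .internal i (nodeVal h k I (2 * i)) (nodeVal h k I (2 * i + 1))
  else .leaf i

/-- A `k`-way branching program for `TEP^h_2(k)`: a finite directed multigraph of
states with `k` distinct output (sink) states labelled by the elements of `[k]`,
every non-output state labelled with a well-formed query, every edge labelled with
an element of `[k]` (`edges s a t` meaning there is an edge from `s` to `t`
labelled `a`), and a distinguished start state. -/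
structure BP (h k : ℕ) where
  State : Type
  fintype : Fintype State
  start : State
  out : Fin k → State
  out_inj : Function.Injective out
  query : State → BPQuery k
  edges : State → Fin k → State → Prop
  out_sink : ∀ (a b : Fin k) (t : State), ¬ edges (out a) b t
  query_wf : ∀ s : State, (¬ ∃ a, out a = s) → queryWF h (query s)

namespace BP

variable {h k : ℕ}

/-- The size of a branching program: its number of states. -/
def size (B : BP h k) : ℕ := @Fintype.card B.State B.fintype

/-- `s` is an output state. -/
def IsOutput (B : BP h k) (s : B.State) : Prop := ∃ a, B.out a = s

/-- `p` is a directed path from the start state to the state `t`: `p` lists the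
successive states together with the labels of the edges leaving them along
the path, and `t` is the final state of the path. -/
def LPath (B : BP h k) (p : List (B.State × Fin k)) (t : B.State) : Prop :=
  List.Chain' (fun x y => B.edges x.1 x.2 y.1) p ∧
  (∀ x, p.getLast? = some x → B.edges x.1 x.2 t) ∧
  (p.head?.map Prod.fst).getD t = B.start

/-- `p` (ending at state `t`) is a computation path of input `I`: a directed path
from the start state in which the edge leaving each state carries the label equal
to `I`'s value of that state's query. -/
def CompPath (B : BP h k) (I : TEPInput h k) (p : List (B.State × Fin k)) (t : B.State) : Prop :=
  B.LPath p t ∧ ∀ x ∈ p, x.2 = queryVal I (B.query x.1)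

/-- Input `I` has a computation path reaching the state `γ`. -/
def Reaches (B : BP h k) (I : TEPInput h k) (γ : B.State) : Prop := ∃ p, B.CompPath I p γ

/-- Input `I` has a complete computation path (one ending at an output state)
passing through the state `γ`. -/
def CompThrough (B : BP h k) (I : TEPInput h k) (γ : B.State) : Prop :=
  ∃ p t, B.CompPath I p t ∧ B.IsOutput t ∧ (γ ∈ p.map Prod.fst ∨ γ = t)

/-- `B` solves `TEP^h_2(k)`: every input has a complete computation path, and every
complete computation path of input `I` ends at the output state labelled `v_1^I`. -/
def Solves (B : BP h k) : Prop :=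
  ∀ I : TEPInput h k,
    (∃ p t, B.CompPath I p t ∧ B.IsOutput t) ∧
    ∀ p t, B.CompPath I p t → B.IsOutput t → t = B.out (nodeVal h k I 1)

/-- `B` is deterministic: every non-output state has exactly `k` out-edges
carrying distinct labels, i.e. exactly one out-edge per label. -/
def Deterministic (B : BP h k) : Prop :=
  ∀ s : B.State, ¬ B.IsOutput s → ∀ a : Fin k, ∃! t : B.State, B.edges s a t

/-- `B` is thrifty: every internal query `f_i(x,y)` made on a complete computation
path of input `I` satisfies `x = v_{2i}^I` and `y = v_{2i+1}^I`. -/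
def Thrifty (B : BP h k) : Prop :=
  ∀ (I : TEPInput h k) p t, B.CompPath I p t → B.IsOutput t →
    ∀ x ∈ p, ∀ (i : ℕ) (xa ya : Fin k), B.query x.1 = BPQuery.internal i xa ya →
      xa = nodeVal h k I (2 * i) ∧ ya = nodeVal h k I (2 * i + 1)

/-- `B` is syntactic read-once: every directed path from the start state to an
output state contains at most one state with each query label. -/
def SyntacticReadOnce (B : BP h k) : Prop :=
  ∀ p t, B.LPath p t → B.IsOutput t → (p.map fun x => B.query x.1).Nodup

/-- `B` is semantic read-once: every complete computation path of every input
contains at most one state with each query label. -/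
def SemanticReadOnce (B : BP h k) : Prop :=
  ∀ (I : TEPInput h k) p t, B.CompPath I p t → B.IsOutput t →
    (p.map fun x => B.query x.1).Nodup

/-- `B` is null-path-free: no directed path from the start state to an output state
contains two states with the same query label whose outgoing edges on the path
carry different labels. -/
def NullPathFree (B : BP h k) : Prop :=
  ∀ p t, B.LPath p t → B.IsOutput t →
    p.Pairwise fun x y => B.query x.1 = B.query y.1 → x.2 = y.2

/-- `R_γ(i)`: the set of values `v_i^I` over inputs `I` having a computation path
reaching `γ`. -/
def Rset (B : BP h k) (γ : B.State) (i : ℕ) : Set (Fin k) :=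
  {a | ∃ I : TEPInput h k, B.Reaches I γ ∧ nodeVal h k I i = a}

/-- `A_γ(i)`: the set of values `v_i^I` over inputs `I` having a complete
computation path through `γ`. -/
def Aset (B : BP h k) (γ : B.State) (i : ℕ) : Set (Fin k) :=
  {a | ∃ I : TEPInput h k, B.CompThrough I γ ∧ nodeVal h k I i = a}

/-- `B` is node-independent: an input reaches `γ` iff each of its correct node
values lies in `R_γ(i)`, and has a complete computation path through `γ` iff each
of its correct node values lies in `A_γ(i)`. -/
def NodeIndependent (B : BP h k) : Prop :=
  ∀ (γ : B.State) (I : TEPInput h k),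
    (B.Reaches I γ ↔ ∀ i, isNode h i → nodeVal h k I i ∈ B.Rset γ i) ∧
    (B.CompThrough I γ ↔ ∀ i, isNode h i → nodeVal h k I i ∈ B.Aset γ i)

/-- `B` is bitwise-independent (for `k = 2^m`, values being identified with their
`m`-bit binary representations): for each state `γ` there are sets of bits
`R_γ(i,l)` and `A_γ(i,l)` such that an input reaches `γ` iff every bit of every
correct node value lies in the corresponding `R_γ(i,l)`, and has a complete
computation path through `γ` iff every bit lies in the corresponding `A_γ(i,l)`. -/
def BitwiseIndependent (B : BP h k) (m : ℕ) : Prop :=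
  ∀ γ : B.State, ∃ R A : ℕ → ℕ → Set Bool,
    (∀ I : TEPInput h k, B.Reaches I γ ↔
      ∀ i, isNode h i → ∀ l, l < m → (nodeVal h k I i : ℕ).testBit l ∈ R i l) ∧
    (∀ I : TEPInput h k, B.CompThrough I γ ↔
      ∀ i, isNode h i → ∀ l, l < m → (nodeVal h k I i : ℕ).testBit l ∈ A i l)

end BP

/-! ### Auxiliary development for the lower bound -/

namespace TEPLB

open Classical

variable {h k : ℕ}

/-- heap ancestor relation: `des` lies in the subtree rooted at `anc`. -/
def desc (anc des : ℕ) : Prop := ∃ d, des / 2 ^ d = anc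

lemma desc_refl (n : ℕ) : desc n n := ⟨0, by simp⟩

lemma desc_le {a b : ℕ} (hd : desc a b) : a ≤ b := by
  obtain ⟨d, rfl⟩ := hd; exact Nat.div_le_self _ _

lemma desc_trans {a b c : ℕ} (h1 : desc a b) (h2 : desc b c) : desc a c := by
  obtain ⟨d, rfl⟩ := h1; obtain ⟨e, rfl⟩ := h2
  exact ⟨e + d, by rw [pow_add, ← Nat.div_div_eq_div_mul]⟩

lemma desc_left (n : ℕ) : desc n (2 * n) :=
  ⟨1, by omega⟩

lemma desc_right (n : ℕ) : desc n (2 * n + 1) :=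
  ⟨1, by omega⟩

lemma not_desc_sibling {n m : ℕ} (hn : 1 ≤ n) (h1 : desc (2 * n) m) (h2 : desc (2 * n + 1) m) :
    False := by
  obtain ⟨d, hd⟩ := h1; obtain ⟨e, he⟩ := h2
  rcases lt_trichotomy d e with hde | rfl | hde
  · have hee : d + (e - d) = e := by omega
    have : m / 2 ^ e = (m / 2 ^ d) / 2 ^ (e - d) := by
      rw [Nat.div_div_eq_div_mul, ← pow_add, hee]
    rw [hd] at this
    have h2n : (2 * n) / 2 ^ (e - d) ≤ (2 * n) / 2 := by
      apply Nat.div_le_div_left _ (by norm_num)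
      calc (2:ℕ) = 2 ^ 1 := rfl
        _ ≤ 2 ^ (e - d) := Nat.pow_le_pow_right (by norm_num) (by omega)
    omega
  · omega
  · have hee : e + (d - e) = d := by omega
    have : m / 2 ^ d = (m / 2 ^ e) / 2 ^ (d - e) := by
      rw [Nat.div_div_eq_div_mul, ← pow_add, hee]
    rw [he] at this
    have h2n : (2 * n + 1) / 2 ^ (d - e) ≤ (2 * n + 1) / 2 := by
      apply Nat.div_le_div_left _ (by norm_num)
      calc (2:ℕ) = 2 ^ 1 := rfl
        _ ≤ 2 ^ (d - e) := Nat.pow_le_pow_right (by norm_num) (by omega)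
    omega

lemma desc_child {n m : ℕ} (hn : 1 ≤ n) (hm : desc n m) (hnm : n ≠ m) :
    desc (2 * n) m ∨ desc (2 * n + 1) m := by
  obtain ⟨d, hd⟩ := hm
  have hdpos : d ≠ 0 := by rintro rfl; simp at hd; omega
  have : m / 2 ^ (d - 1) / 2 = n := by
    rw [Nat.div_div_eq_div_mul]
    have : 2 ^ (d - 1) * 2 = 2 ^ d := by
      rw [← pow_succ]; congr 1; omega
    rw [this, hd]
  rcases Nat.even_or_odd (m / 2 ^ (d - 1)) with ⟨c, hc⟩ | ⟨c, hc⟩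
  · left; exact ⟨d - 1, by omega⟩
  · right; exact ⟨d - 1, by omega⟩

end TEPLB

namespace TEPLB

variable {h k : ℕ}

/-- Cells of an input: leaf cells and function-table cells. -/
abbrev Cell (h k : ℕ) : Type :=
  (Fin (2 ^ (h - 1))) ⊕ (Fin (2 ^ (h - 1) - 1) × Fin k × Fin k)

def cellVal (I : TEPInput h k) : Cell h k → Fin k
  | .inl j => I.1 j
  | .inr (j, x, y) => I.2 j x y

/-- The node a cell belongs to. -/
def nodeOf : Cell h k → ℕ
  | .inl j => 2 ^ (h - 1) + j
  | .inr (j, _, _) => j + 1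

/-- Overwrite a single cell of an input. -/
def wcell (I : TEPInput h k) (c₀ : Cell h k) (a : Fin k) : TEPInput h k :=
  (fun j => if (Sum.inl j : Cell h k) = c₀ then a else I.1 j,
   fun j x y => if (Sum.inr (j, x, y) : Cell h k) = c₀ then a else I.2 j x y)

lemma cellVal_wcell (I : TEPInput h k) (c₀ : Cell h k) (a : Fin k) (c : Cell h k) :
    cellVal (wcell I c₀ a) c = if c = c₀ then a else cellVal I c := by
  rcases c with j | ⟨j, x, y⟩ <;> simp [cellVal, wcell]

lemma cellVal_wcell_self (I : TEPInput h k) (c₀ : Cell h k) (a : Fin k) :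
    cellVal (wcell I c₀ a) c₀ = a := by simp [cellVal_wcell]

lemma cellVal_wcell_ne (I : TEPInput h k) (c₀ : Cell h k) (a : Fin k) {c : Cell h k}
    (hc : c ≠ c₀) : cellVal (wcell I c₀ a) c = cellVal I c := by simp [cellVal_wcell, hc]

/-- The cell that determines the value of node `m` under input `I` (the "thrifty cell"). -/
noncomputable def tcell (I : TEPInput h k) (m : ℕ) : Cell h k :=
  if hm : 1 ≤ m ∧ m < 2 ^ (h - 1) then
    .inr (⟨m - 1, by omega⟩, nodeVal h k I (2 * m), nodeVal h k I (2 * m + 1))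
  else .inl ⟨(m - 2 ^ (h - 1)) % 2 ^ (h - 1), Nat.mod_lt _ (Nat.two_pow_pos _)⟩

lemma two_pow_h (hh : 1 ≤ h) : 2 ^ h = 2 * 2 ^ (h - 1) := by
  calc 2 ^ h = 2 ^ (1 + (h - 1)) := by congr 1; omega
    _ = 2 * 2 ^ (h - 1) := by rw [pow_add]; ring

lemma nodeOf_tcell (hh : 1 ≤ h) (I : TEPInput h k) {m : ℕ} (hm : 1 ≤ m ∧ m < 2 ^ h) :
    nodeOf (tcell I m) = m := by
  have h2 := two_pow_h hh
  unfold tcell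
  split
  · simp [nodeOf]; omega
  · simp only [nodeOf]
    have : m - 2 ^ (h - 1) < 2 ^ (h - 1) := by omega
    rw [Nat.mod_eq_of_lt this]; omega

lemma nodeVal_internal (I : TEPInput h k) {m : ℕ} (hm : 1 ≤ m ∧ m < 2 ^ (h - 1)) :
    nodeVal h k I m = funcAt I m (nodeVal h k I (2 * m)) (nodeVal h k I (2 * m + 1)) := by
  rw [nodeVal]; rw [dif_pos hm]

lemma nodeVal_leaf (I : TEPInput h k) {m : ℕ} (hm : ¬ (1 ≤ m ∧ m < 2 ^ (h - 1))) :
    nodeVal h k I m = leafValAt I m := by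
  rw [nodeVal]; rw [dif_neg hm]

lemma cellVal_tcell (I : TEPInput h k) {m : ℕ} (hm : 1 ≤ m) :
    cellVal I (tcell I m) = nodeVal h k I m := by
  unfold tcell
  split
  · rename_i hmi
    rw [nodeVal_internal I hmi]
    have hlt : m - 1 < 2 ^ (h - 1) - 1 := by omega
    simp [cellVal, funcAt, hlt]
  · rename_i hmi
    rw [nodeVal_leaf I hmi]
    simp [cellVal, leafValAt]

/-- Node values only depend on the cells in the node's subtree. -/
lemma nodeVal_congr (hh : 1 ≤ h) (I J : TEPInput h k) (m : ℕ) (hm1 : 1 ≤ m) (hm2 : m < 2 ^ h)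
    (hc : ∀ c : Cell h k, desc m (nodeOf c) → cellVal I c = cellVal J c) :
    nodeVal h k I m = nodeVal h k J m := by
  have h2 := two_pow_h hh
  by_cases hmi : 1 ≤ m ∧ m < 2 ^ (h - 1)
  · rw [nodeVal_internal I hmi, nodeVal_internal J hmi]
    have hl : nodeVal h k I (2 * m) = nodeVal h k J (2 * m) :=
      nodeVal_congr hh I J (2 * m) (by omega) (by omega)
        (fun c hdc => hc c (desc_trans (desc_left m) hdc))
    have hr : nodeVal h k I (2 * m + 1) = nodeVal h k J (2 * m + 1) :=
      nodeVal_congr hh I J (2 * m + 1) (by omega) (by omega)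
        (fun c hdc => hc c (desc_trans (desc_right m) hdc))
    rw [hl, hr]
    have hlt : m - 1 < 2 ^ (h - 1) - 1 := by omega
    have := hc (.inr (⟨m - 1, by omega⟩, nodeVal h k J (2 * m), nodeVal h k J (2 * m + 1)))
      (by simpa [nodeOf, Nat.sub_add_cancel hm1] using desc_refl m)
    simpa [funcAt, hlt, cellVal] using this
  · rw [nodeVal_leaf I hmi, nodeVal_leaf J hmi]
    have hml : 2 ^ (h - 1) ≤ m := by omega
    have hmod : (m - 2 ^ (h - 1)) % 2 ^ (h - 1) = m - 2 ^ (h - 1) :=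
      Nat.mod_eq_of_lt (by omega)
    have := hc (.inl ⟨(m - 2 ^ (h - 1)) % 2 ^ (h - 1), Nat.mod_lt _ (Nat.two_pow_pos _)⟩)
      (by simp only [nodeOf, hmod]; rw [Nat.add_sub_cancel' hml]; exact desc_refl m)
    simpa [leafValAt, cellVal] using this
termination_by 2 ^ h - m
decreasing_by
  · omega
  · omega

/-- Writing a cell outside the subtree of `m` does not change `v_m`. -/
lemma nodeVal_wcell (hh : 1 ≤ h) (I : TEPInput h k) (c₀ : Cell h k) (a : Fin k) {m : ℕ}
    (hm1 : 1 ≤ m) (hm2 : m < 2 ^ h) (hnd : ¬ desc m (nodeOf c₀)) :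
    nodeVal h k (wcell I c₀ a) m = nodeVal h k I m := by
  apply nodeVal_congr hh _ _ m hm1 hm2
  intro c hdc
  apply cellVal_wcell_ne
  rintro rfl; exact hnd hdc

lemma desc_node_of_child {m c : ℕ} (hm : 1 ≤ m) (hc : c = 2 * m ∨ c = 2 * m + 1) :
    ¬ desc c m := by
  intro hd
  have := desc_le hd
  omega

/-- Overwriting the thrifty cell of `m` sets `v_m` to the new value. -/
lemma nodeVal_wcell_tcell (hh : 1 ≤ h) (I : TEPInput h k) (a : Fin k) {m : ℕ}
    (hm1 : 1 ≤ m) (hm2 : m < 2 ^ h) :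
    nodeVal h k (wcell I (tcell I m) a) m = a := by
  have h2 := two_pow_h hh
  set J := wcell I (tcell I m) a with hJ
  by_cases hmi : 1 ≤ m ∧ m < 2 ^ (h - 1)
  · have hod : nodeOf (tcell I m) = m := nodeOf_tcell hh I ⟨hm1, hm2⟩
    have hl : nodeVal h k J (2 * m) = nodeVal h k I (2 * m) :=
      nodeVal_wcell hh I _ a (by omega) (by omega) (by rw [hod]; exact desc_node_of_child hm1 (Or.inl rfl))
    have hr : nodeVal h k J (2 * m + 1) = nodeVal h k I (2 * m + 1) :=
      nodeVal_wcell hh I _ a (by omega) (by omega) (by rw [hod]; exact desc_node_of_child hm1 (Or.inr rfl))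
    rw [nodeVal_internal J hmi, hl, hr]
    have hlt : m - 1 < 2 ^ (h - 1) - 1 := by omega
    have : funcAt J m (nodeVal h k I (2 * m)) (nodeVal h k I (2 * m + 1))
        = cellVal J (tcell I m) := by
      simp only [funcAt, hlt, dif_pos]
      unfold tcell
      rw [dif_pos hmi]
      simp [cellVal]
    rw [this, hJ, cellVal_wcell_self]
  · rw [nodeVal_leaf J hmi]
    have : leafValAt J m = cellVal J (tcell I m) := by
      unfold tcell
      rw [dif_neg hmi]
      simp [cellVal, leafValAt]
    rw [this, hJ, cellVal_wcell_self]

end TEPLB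

namespace TEPLB

open scoped Classical

variable {h k : ℕ}

def qnode : BPQuery k → ℕ
  | .leaf i => i
  | .internal i _ _ => i

noncomputable def qcell : BPQuery k → Cell h k
  | .leaf i => .inl ⟨(i - 2 ^ (h - 1)) % 2 ^ (h - 1), Nat.mod_lt _ (Nat.two_pow_pos _)⟩
  | .internal i x y =>
    if hi : i - 1 < 2 ^ (h - 1) - 1 then .inr (⟨i - 1, hi⟩, x, y)
    else .inl ⟨0, Nat.two_pow_pos _⟩

lemma queryVal_eq_cellVal (I : TEPInput h k) (q : BPQuery k) (hwf : queryWF h q) :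
    queryVal I q = cellVal I (qcell q) := by
  rcases q with i | ⟨i, x, y⟩
  · simp [queryVal, qcell, leafValAt, cellVal]
  · rcases hwf with ⟨hi1, hi2⟩
    have hlt : i - 1 < 2 ^ (h - 1) - 1 := by omega
    simp [queryVal, qcell, funcAt, hlt, cellVal]

lemma qnode_bounds (hh : 1 ≤ h) (q : BPQuery k) (hwf : queryWF h q) :
    1 ≤ qnode q ∧ qnode q < 2 ^ h := by
  have h2 := two_pow_h hh
  rcases q with i | ⟨i, x, y⟩
  · rcases hwf with ⟨h1, h2⟩
    have := Nat.two_pow_pos (h - 1)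
    constructor <;> simp [qnode] <;> omega
  · rcases hwf with ⟨h1, h2'⟩
    constructor <;> simp [qnode] <;> omega

lemma nodeOf_qcell (hh : 1 ≤ h) (q : BPQuery k) (hwf : queryWF h q) :
    nodeOf (qcell (h := h) (k := k) q) = qnode q := by
  have h2 := two_pow_h hh
  rcases q with i | ⟨i, x, y⟩
  · rcases hwf with ⟨h1, h2'⟩
    simp only [qcell, nodeOf, qnode]
    rw [Nat.mod_eq_of_lt (by omega)]; omega
  · rcases hwf with ⟨h1, h2'⟩
    have hlt : i - 1 < 2 ^ (h - 1) - 1 := by omega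
    simp [qcell, nodeOf, qnode, hlt]; omega

/-- Bundled context: a deterministic thrifty BP solving the problem. -/
structure Setup (h k : ℕ) where
  B : BP h k
  hdet : B.Deterministic
  hsol : B.Solves
  hthr : B.Thrifty
  hh : 2 ≤ h
  hk : 2 ≤ k

namespace Setup

variable {h k : ℕ} (S : Setup h k)

noncomputable def nxt (I : TEPInput h k) (γ : S.B.State) : S.B.State :=
  if hγ : S.B.IsOutput γ then γ
  else (S.hdet γ hγ (queryVal I (S.B.query γ))).choose

lemma edges_nxt {I : TEPInput h k} {γ : S.B.State} (hγ : ¬ S.B.IsOutput γ) :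
    S.B.edges γ (queryVal I (S.B.query γ)) (S.nxt I γ) := by
  rw [nxt, dif_neg hγ]
  exact (S.hdet γ hγ (queryVal I (S.B.query γ))).choose_spec.1

lemma nxt_eq_of_edges {I : TEPInput h k} {γ t : S.B.State} (hγ : ¬ S.B.IsOutput γ)
    (ht : S.B.edges γ (queryVal I (S.B.query γ)) t) : S.nxt I γ = t := by
  rw [nxt, dif_neg hγ]
  exact ((S.hdet γ hγ (queryVal I (S.B.query γ))).choose_spec.2 t ht).symm

noncomputable def run (I : TEPInput h k) : ℕ → S.B.State
  | 0 => S.B.start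
  | n + 1 => S.nxt I (run I n)

lemma run_zero (I : TEPInput h k) : S.run I 0 = S.B.start := rfl

lemma run_succ (I : TEPInput h k) (n : ℕ) : S.run I (n + 1) = S.nxt I (S.run I n) := rfl

lemma not_output_of_edges {γ : S.B.State} {a : Fin k} {t : S.B.State}
    (he : S.B.edges γ a t) : ¬ S.B.IsOutput γ := by
  rintro ⟨b, rfl⟩
  exact S.B.out_sink b a t he

lemma run_of_compPath {I : TEPInput h k} {p : List (S.B.State × Fin k)} {t : S.B.State}
    (hp : S.B.CompPath I p t) :
    ∀ j, (hj : j ≤ p.length) →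
      S.run I j = if hlt : j < p.length then (p.get ⟨j, hlt⟩).1 else t := by
  obtain ⟨⟨hchain, hlast, hhead⟩, hlab⟩ := hp
  intro j
  induction j with
  | zero =>
    intro hj
    rcases p with _ | ⟨a, as⟩
    · simp only [List.length_nil, Nat.lt_irrefl, dif_neg, not_false_iff]
      simp only [List.head?_nil, Option.map_none, Option.getD_none] at hhead
      exact hhead ▸ rfl
    · simp only [List.length_cons, Nat.succ_pos, dif_pos]
      simp only [List.head?_cons, Option.map_some, Option.getD_some] at hhead
      exact hhead ▸ rfl
  | succ j ih =>
    intro hj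
    have hj' : j < p.length := by omega
    have hrj : S.run I j = (p.get ⟨j, hj'⟩).1 := by
      rw [ih (by omega), dif_pos hj']
    set x := p.get ⟨j, hj'⟩ with hx
    have hxlab : x.2 = queryVal I (S.B.query x.1) := hlab x (List.get_mem p ⟨j, hj'⟩)
    have hedge : ∃ u, S.B.edges x.1 x.2 u ∧
        u = if hlt : j + 1 < p.length then (p.get ⟨j + 1, hlt⟩).1 else t := by
      by_cases hlt : j + 1 < p.length
      · refine ⟨(p.get ⟨j + 1, hlt⟩).1, ?_, by rw [dif_pos hlt]⟩
        have := List.isChain_iff_getElem.1 hchain j (by omega)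
        exact this
      · refine ⟨t, ?_, by rw [dif_neg hlt]⟩
        apply hlast
        have hjlen : p.length - 1 = j := by omega
        rw [List.getLast?_eq_getElem?, hjlen]
        exact List.getElem?_eq_getElem hj'
    obtain ⟨u, hu, hueq⟩ := hedge
    have hno : ¬ S.B.IsOutput x.1 := S.not_output_of_edges hu
    have : S.run I (j + 1) = u := by
      rw [S.run_succ, hrj]
      exact S.nxt_eq_of_edges hno (hxlab ▸ hu)
    rw [this, hueq]

lemma exists_output (I : TEPInput h k) : ∃ T, S.B.IsOutput (S.run I T) := by
  obtain ⟨p, t, hp, hout⟩ := (S.hsol I).1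
  refine ⟨p.length, ?_⟩
  have := S.run_of_compPath hp p.length le_rfl
  rw [dif_neg (lt_irrefl _)] at this
  rw [this]; exact hout

noncomputable def TT (I : TEPInput h k) : ℕ := Nat.find (S.exists_output I)

lemma isOutput_TT (I : TEPInput h k) : S.B.IsOutput (S.run I (S.TT I)) :=
  Nat.find_spec (S.exists_output I)

lemma not_output_lt {I : TEPInput h k} {t : ℕ} (ht : t < S.TT I) :
    ¬ S.B.IsOutput (S.run I t) := Nat.find_min (S.exists_output I) ht

noncomputable def ans (I : TEPInput h k) (t : ℕ) : Fin k :=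
  queryVal I (S.B.query (S.run I t))

noncomputable def pL (I : TEPInput h k) (m : ℕ) : List (S.B.State × Fin k) :=
  (List.range m).map fun t => (S.run I t, S.ans I t)

lemma run_succ_edges {I : TEPInput h k} {t : ℕ} (ht : ¬ S.B.IsOutput (S.run I t)) :
    S.B.edges (S.run I t) (S.ans I t) (S.run I (t + 1)) := by
  rw [S.run_succ]; exact S.edges_nxt ht

lemma compPath_pL (I : TEPInput h k) : S.B.CompPath I (S.pL I (S.TT I)) (S.run I (S.TT I)) := by
  refine ⟨⟨?_, ?_, ?_⟩, ?_⟩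
  · apply List.isChain_iff_getElem.2
    intro i hi
    simp only [pL, List.length_map, List.length_range] at hi
    simp only [pL, List.getElem_map, List.getElem_range]
    exact S.run_succ_edges (S.not_output_lt (by omega))
  · intro x hx
    rcases Nat.eq_zero_or_pos (S.TT I) with h0 | hpos
    · simp [pL, h0] at hx
    · have hlen : (S.pL I (S.TT I)).length = S.TT I := by simp [pL]
      have hgl : (S.pL I (S.TT I)).getLast? =
          some (S.run I (S.TT I - 1), S.ans I (S.TT I - 1)) := by
        rw [List.getLast?_eq_getElem?, hlen]
        simp only [pL, List.getElem?_map, List.getElem?_range, show S.TT I - 1 < S.TT I by omega,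
          if_pos]
        rfl
      rw [hgl] at hx
      injection hx with hx
      subst hx
      have := S.run_succ_edges (S.not_output_lt (show S.TT I - 1 < S.TT I by omega))
      have heq : S.TT I - 1 + 1 = S.TT I := by omega
      rwa [heq] at this
  · rcases Nat.eq_zero_or_pos (S.TT I) with h0 | hpos
    · simp [pL, h0, run]
    · have : (S.pL I (S.TT I)).head? = some (S.run I 0, S.ans I 0) := by
        simp only [pL]
        rcases Nat.exists_eq_add_of_lt hpos with ⟨m, hm⟩
        rw [show S.TT I = m + 1 by omega]
        simp [List.range_succ_eq_map]
      rw [this]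
      simp [run]
  · intro x hx
    simp only [pL, List.mem_map, List.mem_range] at hx
    obtain ⟨t, _, rfl⟩ := hx
    rfl

lemma mem_pL {I : TEPInput h k} {t : ℕ} (ht : t < S.TT I) :
    (S.run I t, S.ans I t) ∈ S.pL I (S.TT I) := by
  simp only [pL, List.mem_map, List.mem_range]
  exact ⟨t, ht, rfl⟩

lemma sol_run (I : TEPInput h k) : S.run I (S.TT I) = S.B.out (nodeVal h k I 1) :=
  (S.hsol I).2 _ _ (S.compPath_pL I) (S.isOutput_TT I)

lemma thr_run {I : TEPInput h k} {t : ℕ} (ht : t < S.TT I) {i : ℕ} {x y : Fin k}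
    (hq : S.B.query (S.run I t) = .internal i x y) :
    x = nodeVal h k I (2 * i) ∧ y = nodeVal h k I (2 * i + 1) :=
  S.hthr I _ _ (S.compPath_pL I) (S.isOutput_TT I) _ (S.mem_pL ht) i x y hq

lemma wf_lab {I : TEPInput h k} {t : ℕ} (ht : t < S.TT I) :
    queryWF h (S.B.query (S.run I t)) := by
  apply S.B.query_wf
  exact S.not_output_lt ht

lemma run_congr {I J : TEPInput h k} {m : ℕ}
    (hans : ∀ t < m, queryVal J (S.B.query (S.run I t)) = S.ans I t)
    (hno : ∀ t < m, ¬ S.B.IsOutput (S.run I t)) :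
    ∀ t ≤ m, S.run J t = S.run I t := by
  intro t
  induction t with
  | zero => intro _; rfl
  | succ t ih =>
    intro hts
    have h1 : S.run J t = S.run I t := ih (by omega)
    rw [S.run_succ, h1]
    apply S.nxt_eq_of_edges (hno t (by omega))
    rw [hans t (by omega)]
    exact S.run_succ_edges (hno t (by omega))

end Setup

end TEPLB

namespace TEPLB

namespace Setup

open scoped Classical

variable {h k : ℕ} (S : Setup h k)

lemma hh1 (S' : Setup h k) : 1 ≤ h := by have := S'.hh; omega

noncomputable def lab (I : TEPInput h k) (t : ℕ) : BPQuery k := S.B.query (S.run I t)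

noncomputable def qn (I : TEPInput h k) (t : ℕ) : ℕ := qnode (S.lab I t)

lemma qn_bounds {I : TEPInput h k} {t : ℕ} (ht : t < S.TT I) :
    1 ≤ S.qn I t ∧ S.qn I t < 2 ^ h :=
  qnode_bounds S.hh1 _ (S.wf_lab ht)

lemma qcell_lab {I : TEPInput h k} {t : ℕ} (ht : t < S.TT I) :
    qcell (S.lab I t) = tcell I (S.qn I t) ∧ S.ans I t = nodeVal h k I (S.qn I t) := by
  have hwf : queryWF h (S.lab I t) := S.wf_lab ht
  have h2 := two_pow_h (h := h) S.hh1
  rcases hq : S.lab I t with i | ⟨i, x, y⟩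
  · rw [hq] at hwf
    rcases hwf with ⟨h1, h2'⟩
    have hni : ¬ (1 ≤ i ∧ i < 2 ^ (h - 1)) := by omega
    constructor
    · simp only [qcell, qn, hq, qnode, tcell, dif_neg hni]
    · show queryVal I (S.lab I t) = _
      rw [hq]
      simp only [qn, hq, qnode, queryVal]
      rw [nodeVal_leaf I hni]
  · rw [hq] at hwf
    rcases hwf with ⟨h1, h2'⟩
    obtain ⟨hx, hy⟩ := S.thr_run ht hq
    have hii : 1 ≤ i ∧ i < 2 ^ (h - 1) := ⟨h1, h2'⟩
    have hlt : i - 1 < 2 ^ (h - 1) - 1 := by omega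
    constructor
    · simp only [qcell, qn, hq, qnode, tcell, dif_pos hii, hlt, dif_pos, hx, hy]
    · show queryVal I (S.lab I t) = _
      rw [hq]
      simp only [qn, hq, qnode, queryVal]
      rw [nodeVal_internal I hii, hx, hy]

lemma ans_eq_nodeVal {I : TEPInput h k} {t : ℕ} (ht : t < S.TT I) :
    S.ans I t = nodeVal h k I (S.qn I t) := (S.qcell_lab ht).2

/-- time `t` makes a query whose node is a child of `u`. -/
def parentQ (I : TEPInput h k) (t u : ℕ) : Prop :=
  t < S.TT I ∧ ∃ p x y, S.lab I t = .internal p x y ∧ (u = 2 * p ∨ u = 2 * p + 1)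

lemma parentQ_bounds {I : TEPInput h k} {t u : ℕ} (hpq : S.parentQ I t u) :
    2 ≤ u ∧ u < 2 ^ h := by
  obtain ⟨ht, p, x, y, hq, hu⟩ := hpq
  have hwf : queryWF h (S.lab I t) := S.wf_lab ht
  rw [hq] at hwf
  rcases hwf with ⟨h1, h2'⟩
  have h2 := two_pow_h (h := h) S.hh1
  omega

/-- Runs agree after overwriting the thrifty cell of a node that is not queried before `m`. -/
lemma run_agree_wcell {I : TEPInput h k} {u : ℕ} (hu1 : 1 ≤ u) (hu2 : u < 2 ^ h) {m : ℕ}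
    (hm : ∀ t < m, t < S.TT I) (hnq : ∀ t < m, S.qn I t ≠ u) (a : Fin k) :
    ∀ t ≤ m, S.run (wcell I (tcell I u) a) t = S.run I t := by
  apply S.run_congr
  · intro t htm
    have ht := hm t htm
    have hwf : queryWF h (S.lab I t) := S.wf_lab ht
    show queryVal (wcell I (tcell I u) a) (S.lab I t) = S.ans I t
    rw [queryVal_eq_cellVal _ _ hwf, (S.qcell_lab ht).1]
    rw [cellVal_wcell_ne]
    · rw [← (S.qcell_lab ht).1, ← queryVal_eq_cellVal _ _ hwf]
      rfl
    · intro hcc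
      apply hnq t htm
      have e1 := nodeOf_tcell S.hh1 I (m := S.qn I t) ⟨(S.qn_bounds ht).1, (S.qn_bounds ht).2⟩
      have e2 := nodeOf_tcell S.hh1 I (m := u) ⟨hu1, hu2⟩
      rw [← e1, ← e2, hcc]
  · intro t htm
    exact S.not_output_lt (hm t htm)

lemma exists_ne_val (v : Fin k) (hk : 2 ≤ k) : ∃ a : Fin k, a ≠ v := by
  haveI : Nontrivial (Fin k) := Fin.nontrivial_iff_two_le.2 hk
  exact exists_ne v

/-- Before any query to a child-of-`u` style internal query, node `u` itself is queried. -/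
lemma child_queried_before {I : TEPInput h k} {u t : ℕ} (hpq : S.parentQ I t u) :
    ∃ t' < t, t' < S.TT I ∧ S.qn I t' = u := by
  have hex : ∃ t, S.parentQ I t u := ⟨t, hpq⟩
  set t0 := Nat.find hex with ht0
  have hpq0 : S.parentQ I t0 u := Nat.find_spec hex
  have ht0t : t0 ≤ t := Nat.find_le hpq
  obtain ⟨hub1, hub2⟩ := S.parentQ_bounds hpq0
  by_contra hno
  push_neg at hno
  have hnq : ∀ t' < t0, S.qn I t' ≠ u := by
    intro t' ht'
    exact hno t' (by omega) (by have := hpq0.1; omega)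
  obtain ⟨a', ha'⟩ := exists_ne_val (nodeVal h k I u) S.hk
  set J := wcell I (tcell I u) a' with hJ
  have hagree : ∀ t' ≤ t0, S.run J t' = S.run I t' :=
    S.run_agree_wcell (by omega) hub2 (fun t' ht' => by have := hpq0.1; omega) hnq a'
  have hrun0 : S.run J t0 = S.run I t0 := hagree t0 le_rfl
  have ht0TJ : t0 < S.TT J := by
    by_contra hc
    push_neg at hc
    have := S.isOutput_TT J
    rw [hagree _ hc] at this
    exact S.not_output_lt (show S.TT J < S.TT I by have := hpq0.1; omega) this
  obtain ⟨htTT, p, x, y, hq, hu⟩ := hpq0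
  have hqJ : S.B.query (S.run J t0) = .internal p x y := by rw [hrun0]; exact hq
  obtain ⟨hxJ, hyJ⟩ := S.thr_run ht0TJ hqJ
  obtain ⟨hxI, hyI⟩ := S.thr_run htTT hq
  have hvJ : nodeVal h k J u = a' := nodeVal_wcell_tcell S.hh1 I a' (by omega) hub2
  rcases hu with rfl | rfl
  · rw [← hxJ, hxI] at hvJ
    exact ha' hvJ.symm
  · rw [← hyJ, hyI] at hvJ
    exact ha' hvJ.symm

/-- The root is queried on every complete computation path. -/
lemma root_queried (I : TEPInput h k) : ∃ t < S.TT I, S.qn I t = 1 := by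
  by_contra hno
  push_neg at hno
  obtain ⟨a', ha'⟩ := exists_ne_val (nodeVal h k I 1) S.hk
  set J := wcell I (tcell I 1) a' with hJ
  have h1lt : (1:ℕ) < 2 ^ h := by
    have := two_pow_h (h := h) S.hh1
    have := Nat.two_pow_pos (h - 1)
    omega
  have hagree : ∀ t' ≤ S.TT I, S.run J t' = S.run I t' :=
    S.run_agree_wcell le_rfl h1lt (fun t ht => ht) hno a'
  have hTT : S.TT J = S.TT I := by
    have hle : S.TT J ≤ S.TT I := by
      apply Nat.find_le
      rw [hagree _ le_rfl]
      exact S.isOutput_TT I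
    rcases Nat.lt_or_ge (S.TT J) (S.TT I) with hlt | hge
    · exfalso
      have := S.isOutput_TT J
      rw [hagree _ (by omega)] at this
      exact S.not_output_lt hlt this
    · omega
  have e1 := S.sol_run I
  have e2 := S.sol_run J
  rw [hTT, hagree _ le_rfl, e1] at e2
  have := S.B.out_inj e2
  have hvJ : nodeVal h k J 1 = a' := nodeVal_wcell_tcell S.hh1 I a' le_rfl h1lt
  rw [hvJ] at this
  exact ha' this.symm

end Setup

end TEPLB

namespace TEPLB

namespace Setup

open scoped Classical

variable {h k : ℕ} (S : Setup h k)

/-- Node `u`'s value is "pebbled" at time `s`: there is a later use of `u` (a thrifty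
query to its parent) with no query to `u` in between. -/
def memC (I : TEPInput h k) (s u : ℕ) : Prop :=
  ∃ Lq, s ≤ Lq ∧ S.parentQ I Lq u ∧ ∀ t', s ≤ t' → t' < Lq → S.qn I t' ≠ u

lemma memC_bounds {I : TEPInput h k} {s u : ℕ} (hm : S.memC I s u) : 2 ≤ u ∧ u < 2 ^ h := by
  obtain ⟨Lq, _, hpq, _⟩ := hm
  exact S.parentQ_bounds hpq

lemma memC_lt_TT {I : TEPInput h k} {s u : ℕ} (hm : S.memC I s u) : s < S.TT I := by
  obtain ⟨Lq, h1, hpq, _⟩ := hm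
  have := hpq.1; omega

lemma memC_not_zero {I : TEPInput h k} (u : ℕ) : ¬ S.memC I 0 u := by
  rintro ⟨Lq, _, hpq, hint⟩
  obtain ⟨t', ht', hTT, hqn⟩ := S.child_queried_before hpq
  exact hint t' (Nat.zero_le _) ht' hqn

lemma memC_pred {I : TEPInput h k} {t u : ℕ} (hm : S.memC I (t + 1) u)
    (hnq : S.qn I t ≠ u) : S.memC I t u := by
  obtain ⟨Lq, h1, hpq, hint⟩ := hm
  refine ⟨Lq, by omega, hpq, ?_⟩
  intro t' ht1 ht2
  rcases Nat.eq_or_lt_of_le ht1 with rfl | hlt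
  · exact hnq
  · exact hint t' (by omega) ht2

lemma memC_of_query {I : TEPInput h k} {t p : ℕ} {x y : Fin k} (ht : t < S.TT I)
    (hq : S.lab I t = .internal p x y) {u : ℕ} (hu : u = 2 * p ∨ u = 2 * p + 1) :
    S.memC I t u :=
  ⟨t, le_rfl, ⟨ht, p, x, y, hq, hu⟩, fun t' h1 h2 => by omega⟩

/-- The label at a time querying an internal node is an internal query to it. -/
lemma lab_internal {I : TEPInput h k} {t : ℕ} (ht : t < S.TT I)
    (hint : S.qn I t < 2 ^ (h - 1)) :
    ∃ x y, S.lab I t = .internal (S.qn I t) x y := by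
  have hwf : queryWF h (S.lab I t) := S.wf_lab ht
  rcases hq : S.lab I t with i | ⟨i, x, y⟩
  · rw [hq] at hwf
    rcases hwf with ⟨h1, _⟩
    simp only [qn, hq, qnode] at hint
    omega
  · exact ⟨x, y, by simp [qn, hq, qnode]⟩

/-- Pebbling bottleneck: below any pebbled node whose subtree was once empty, `m`
incomparable pebbles must be simultaneously present at some intermediate time. -/
lemma pebble (I : TEPInput h k) : ∀ m, 1 ≤ m → m ≤ h → ∀ u t r,
    2 ^ (h - m) ≤ u → u < 2 ^ (h - m + 1) →
    S.memC I t u → (∀ w, desc u w → ¬ S.memC I r w) → r < t →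
    ∃ s, r < s ∧ s ≤ t ∧ ∃ F : Finset ℕ, F.card = m ∧
      (∀ w ∈ F, desc u w ∧ S.memC I s w) ∧
      (↑F : Set ℕ).Pairwise (fun a b => ¬ desc a b) := by
  intro m
  induction m with
  | zero => omega
  | succ m ih =>
    intro _ hmh u t r hu1 hu2 hmem hempty hrt
    rcases Nat.eq_zero_or_pos m with rfl | hm1
    · -- base case : a single pebble
      refine ⟨t, hrt, le_rfl, {u}, Finset.card_singleton u, ?_, by simp⟩
      intro w hw
      rw [Finset.mem_singleton] at hw
      constructor
      · rw [hw]; exact desc_refl u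
      · rw [hw]; exact hmem
    -- step
    have hu0 : 1 ≤ u := by have := Nat.two_pow_pos (h - (m+1)); omega
    have hpow : 2 ^ (h - m) = 2 * 2 ^ (h - (m + 1)) := by
      rw [← pow_succ']
      congr 1
      omega
    have hupper : u < 2 ^ (h - 1) := by
      have hle : 2 ^ (h - m) ≤ 2 ^ (h - 1) := Nat.pow_le_pow_right (by norm_num) (by omega)
      have : h - (m + 1) + 1 = h - m := by omega
      rw [this] at hu2
      omega
    -- first entry time t0
    have hexP : ∃ t', t' ≤ t ∧ ∀ t'', t' ≤ t'' → t'' ≤ t → S.memC I t'' u := by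
      refine ⟨t, le_rfl, ?_⟩
      intro t'' h1 h2
      have : t'' = t := by omega
      exact this ▸ hmem
    set t0 := Nat.find hexP with ht0def
    obtain ⟨ht0t, hPt0⟩ := Nat.find_spec hexP
    have hrt0 : r < t0 := by
      by_contra hc
      push_neg at hc
      exact hempty u (desc_refl u) (hPt0 r hc (by omega))
    have hnmem : ¬ S.memC I (t0 - 1) u := by
      have hmin := Nat.find_min hexP (show t0 - 1 < t0 by omega)
      push_neg at hmin
      obtain ⟨t'', h1, h2, h3⟩ := hmin (by omega)
      have : t'' = t0 - 1 := by
        by_contra hne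
        exact h3 (hPt0 t'' (by omega) h2)
      exact this ▸ h3
    have hmem_t0 : S.memC I t0 u := hPt0 t0 le_rfl ht0t
    have hq_t0 : S.qn I (t0 - 1) = u := by
      by_contra hne
      apply hnmem
      apply S.memC_pred (t := t0 - 1) _ hne
      have : t0 - 1 + 1 = t0 := by omega
      rw [this]
      exact hmem_t0
    have ht0TT : t0 - 1 < S.TT I := by
      have := S.memC_lt_TT hmem_t0
      omega
    obtain ⟨x, y, hlabq⟩ := S.lab_internal ht0TT (by rw [hq_t0]; exact hupper)
    rw [hq_t0] at hlabq
    have hmem2u : S.memC I (t0 - 1) (2 * u) := S.memC_of_query ht0TT hlabq (Or.inl rfl)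
    have hmem2u1 : S.memC I (t0 - 1) (2 * u + 1) := S.memC_of_query ht0TT hlabq (Or.inr rfl)
    -- last time one of the child subtrees is empty
    set Pe : ℕ → Prop := fun t' => t' ≤ t0 - 1 ∧
      ((∀ w, desc (2 * u) w → ¬ S.memC I t' w) ∨ (∀ w, desc (2 * u + 1) w → ¬ S.memC I t' w))
      with hPedef
    have hPer : Pe r := by
      refine ⟨by omega, Or.inl ?_⟩
      intro w hw
      exact hempty w (desc_trans (desc_left u) hw)
    have hrb : r ≤ t0 - 1 := by omega
    set t1 := Nat.findGreatest Pe (t0 - 1) with ht1def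
    have hPet1 : Pe t1 := Nat.findGreatest_spec hrb hPer
    have hrt1 : r ≤ t1 := Nat.le_findGreatest hrb hPer
    have ht1b : t1 ≤ t0 - 1 := Nat.findGreatest_le _
    have ht1lt : t1 < t0 - 1 := by
      rcases Nat.eq_or_lt_of_le ht1b with heq | hlt
      · exfalso
        rcases hPet1.2 with hs | hs
        · exact hs (2 * u) (desc_refl _) (heq ▸ hmem2u)
        · exact hs (2 * u + 1) (desc_refl _) (heq ▸ hmem2u1)
      · exact hlt
    have hmax : ∀ s', t1 < s' → s' ≤ t0 - 1 → ¬ Pe s' := by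
      intro s' h1 h2
      exact Nat.findGreatest_is_greatest h1 h2
    -- symmetric handling of the empty child
    have key : ∀ a b : ℕ,
        ((a = 2 * u ∧ b = 2 * u + 1) ∨ (a = 2 * u + 1 ∧ b = 2 * u)) →
        (∀ w, desc a w → ¬ S.memC I t1 w) →
        S.memC I (t0 - 1) a →
        (∀ s', t1 < s' → s' ≤ t0 - 1 → ∃ w, desc b w ∧ S.memC I s' w) →
        ∃ s, r < s ∧ s ≤ t ∧ ∃ F : Finset ℕ, F.card = m + 1 ∧
          (∀ w ∈ F, desc u w ∧ S.memC I s w) ∧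
          (↑F : Set ℕ).Pairwise (fun a b => ¬ desc a b) := by
      intro a b hab hemptyA hmemA hnonB
      have hlevA : 2 ^ (h - m) ≤ a ∧ a < 2 ^ (h - m + 1) := by
        have h1 : h - (m + 1) + 1 = h - m := by omega
        rw [h1] at hu2
        have hpow2 : 2 ^ (h - m + 1) = 2 * 2 ^ (h - m) := by rw [pow_succ]; ring
        rcases hab with ⟨rfl, rfl⟩ | ⟨rfl, rfl⟩ <;> omega
      obtain ⟨s, hs1, hs2, F, hFcard, hFprop, hFpair⟩ :=
        ih hm1 (by omega) a (t0 - 1) t1 hlevA.1 hlevA.2 hmemA hemptyA ht1lt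
      obtain ⟨wb, hwb_desc, hwb_mem⟩ := hnonB s hs1 hs2
      have hdisj : ∀ x, desc a x → desc b x → False := by
        intro x hax hbx
        rcases hab with ⟨rfl, rfl⟩ | ⟨rfl, rfl⟩
        · exact not_desc_sibling hu0 hax hbx
        · exact not_desc_sibling hu0 hbx hax
      have hwbF : wb ∉ F := by
        intro hmem'
        exact hdisj wb (hFprop wb hmem').1 hwb_desc
      refine ⟨s, by omega, by omega, insert wb F, ?_, ?_, ?_⟩
      · rw [Finset.card_insert_of_notMem hwbF, hFcard]
      · intro w hw
        rcases Finset.mem_insert.1 hw with rfl | hw'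
        · refine ⟨?_, hwb_mem⟩
          rcases hab with ⟨rfl, rfl⟩ | ⟨rfl, rfl⟩
          · exact desc_trans (desc_right u) hwb_desc
          · exact desc_trans (desc_left u) hwb_desc
        · refine ⟨?_, (hFprop w hw').2⟩
          rcases hab with ⟨rfl, rfl⟩ | ⟨rfl, rfl⟩
          · exact desc_trans (desc_left u) (hFprop w hw').1
          · exact desc_trans (desc_right u) (hFprop w hw').1
      · rw [Finset.coe_insert]
        apply Set.Pairwise.insert hFpair
        intro x hxF hxne
        constructor
        · intro hdwx
          exact hdisj x (hFprop x hxF).1 (desc_trans hwb_desc hdwx)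
        · intro hdxw
          exact hdisj wb (desc_trans (hFprop x hxF).1 hdxw) hwb_desc
    rcases hPet1.2 with hs | hs
    · refine key (2 * u) (2 * u + 1) (Or.inl ⟨rfl, rfl⟩) hs hmem2u ?_
      intro s' h1 h2
      have hnPe := hmax s' h1 h2
      have hno : ¬ ((∀ w, desc (2 * u) w → ¬ S.memC I s' w) ∨
          (∀ w, desc (2 * u + 1) w → ¬ S.memC I s' w)) := fun hor => hnPe ⟨h2, hor⟩
      push_neg at hno
      exact hno.2
    · refine key (2 * u + 1) (2 * u) (Or.inr ⟨rfl, rfl⟩) hs hmem2u1 ?_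
      intro s' h1 h2
      have hnPe := hmax s' h1 h2
      have hno : ¬ ((∀ w, desc (2 * u) w → ¬ S.memC I s' w) ∨
          (∀ w, desc (2 * u + 1) w → ¬ S.memC I s' w)) := fun hor => hnPe ⟨h2, hor⟩
      push_neg at hno
      exact hno.1

end Setup

end TEPLB

namespace TEPLB

namespace Setup

open scoped Classical

variable {h k : ℕ} (S : Setup h k)

/-- At some time, `h` pairwise-incomparable nodes are simultaneously pebbled. -/
lemma bottleneck (I : TEPInput h k) :
    ∃ s, ∃ F : Finset ℕ, F.card = h ∧ (∀ u ∈ F, S.memC I s u) ∧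
      (↑F : Set ℕ).Pairwise (fun a b => ¬ desc a b) := by
  obtain ⟨T0, hT0TT, hT0q⟩ := S.root_queried I
  have h1lt : (1:ℕ) < 2 ^ (h - 1) := by
    have h2 := S.hh
    calc (1:ℕ) < 2 ^ 1 := by norm_num
      _ ≤ 2 ^ (h - 1) := Nat.pow_le_pow_right (by norm_num) (by omega)
  obtain ⟨x, y, hlabq⟩ := S.lab_internal hT0TT (by rw [hT0q]; exact h1lt)
  rw [hT0q] at hlabq
  have hmem2 : S.memC I T0 (2 * 1) := S.memC_of_query hT0TT hlabq (Or.inl rfl)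
  have hmem3 : S.memC I T0 (2 * 1 + 1) := S.memC_of_query hT0TT hlabq (Or.inr rfl)
  set Pe : ℕ → Prop := fun t' => t' ≤ T0 ∧
    ((∀ w, desc (2 * 1) w → ¬ S.memC I t' w) ∨ (∀ w, desc (2 * 1 + 1) w → ¬ S.memC I t' w))
    with hPedef
  have hPe0 : Pe 0 := ⟨Nat.zero_le _, Or.inl fun w _ => S.memC_not_zero w⟩
  set t1 := Nat.findGreatest Pe T0 with ht1def
  have hPet1 : Pe t1 := Nat.findGreatest_spec (Nat.zero_le _) hPe0
  have ht1b : t1 ≤ T0 := Nat.findGreatest_le _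
  have ht1lt : t1 < T0 := by
    rcases Nat.eq_or_lt_of_le ht1b with heq | hlt
    · exfalso
      rcases hPet1.2 with hs | hs
      · exact hs (2 * 1) (desc_refl _) (heq ▸ hmem2)
      · exact hs (2 * 1 + 1) (desc_refl _) (heq ▸ hmem3)
    · exact hlt
  have hmax : ∀ s', t1 < s' → s' ≤ T0 → ¬ Pe s' := by
    intro s' hgt hle
    exact Nat.findGreatest_is_greatest hgt hle
  have hlev : ∀ a : ℕ, (a = 2 * 1 ∨ a = 2 * 1 + 1) →
      2 ^ (h - (h - 1)) ≤ a ∧ a < 2 ^ (h - (h - 1) + 1) := by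
    intro a ha
    have e1 : h - (h - 1) = 1 := by have := S.hh; omega
    rw [e1]
    norm_num
    omega
  have key : ∀ a b : ℕ,
      ((a = 2 * 1 ∧ b = 2 * 1 + 1) ∨ (a = 2 * 1 + 1 ∧ b = 2 * 1)) →
      (∀ w, desc a w → ¬ S.memC I t1 w) →
      S.memC I T0 a →
      (∀ s', t1 < s' → s' ≤ T0 → ∃ w, desc b w ∧ S.memC I s' w) →
      ∃ s, ∃ F : Finset ℕ, F.card = h ∧ (∀ u ∈ F, S.memC I s u) ∧
        (↑F : Set ℕ).Pairwise (fun a b => ¬ desc a b) := by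
    intro a b hab hemptyA hmemA hnonB
    have hha : 1 ≤ h - 1 := by have := S.hh; omega
    obtain ⟨s, hs1, hs2, F, hFcard, hFprop, hFpair⟩ :=
      S.pebble I (h - 1) hha (by omega) a T0 t1
        (hlev a (by tauto)).1 (hlev a (by tauto)).2 hmemA hemptyA ht1lt
    obtain ⟨wb, hwb_desc, hwb_mem⟩ := hnonB s hs1 hs2
    have hdisj : ∀ x, desc a x → desc b x → False := by
      intro x hax hbx
      rcases hab with ⟨rfl, rfl⟩ | ⟨rfl, rfl⟩
      · exact not_desc_sibling le_rfl hax hbx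
      · exact not_desc_sibling le_rfl hbx hax
    have hwbF : wb ∉ F := fun hmem' => hdisj wb (hFprop wb hmem').1 hwb_desc
    refine ⟨s, insert wb F, ?_, ?_, ?_⟩
    · rw [Finset.card_insert_of_notMem hwbF, hFcard]
      have := S.hh; omega
    · intro w hw
      rcases Finset.mem_insert.1 hw with rfl | hw'
      · exact hwb_mem
      · exact (hFprop w hw').2
    · rw [Finset.coe_insert]
      apply Set.Pairwise.insert hFpair
      intro x hxF hxne
      constructor
      · intro hdwx
        exact hdisj x (hFprop x hxF).1 (desc_trans hwb_desc hdwx)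
      · intro hdxw
        exact hdisj wb (desc_trans (hFprop x hxF).1 hdxw) hwb_desc
  rcases hPet1.2 with hs | hs
  · refine key (2 * 1) (2 * 1 + 1) (Or.inl ⟨rfl, rfl⟩) hs hmem2 ?_
    intro s' hgt hle
    have hnPe := hmax s' hgt hle
    have hno : ¬ ((∀ w, desc (2 * 1) w → ¬ S.memC I s' w) ∨
        (∀ w, desc (2 * 1 + 1) w → ¬ S.memC I s' w)) := fun hor => hnPe ⟨hle, hor⟩
    push_neg at hno
    exact hno.2
  · refine key (2 * 1 + 1) (2 * 1) (Or.inr ⟨rfl, rfl⟩) hs hmem3 ?_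
    intro s' hgt hle
    have hnPe := hmax s' hgt hle
    have hno : ¬ ((∀ w, desc (2 * 1) w → ¬ S.memC I s' w) ∨
        (∀ w, desc (2 * 1 + 1) w → ¬ S.memC I s' w)) := fun hor => hnPe ⟨hle, hor⟩
    push_neg at hno
    exact hno.1

end Setup

end TEPLB

namespace TEPLB

open scoped Classical

variable {h k : ℕ}

/-- Canonical choice of an `h`-element antichain inside a set of nodes. -/
noncomputable def pickF (h : ℕ) (X : Set ℕ) : Finset ℕ :=
  if hX : ∃ F : Finset ℕ, F.card = h ∧ (↑F : Set ℕ).Pairwise (fun a b => ¬ desc a b) ∧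
      ∀ u ∈ F, u ∈ X then hX.choose else ∅

lemma pickF_spec {h : ℕ} {X : Set ℕ}
    (hX : ∃ F : Finset ℕ, F.card = h ∧ (↑F : Set ℕ).Pairwise (fun a b => ¬ desc a b) ∧
      ∀ u ∈ F, u ∈ X) :
    (pickF h X).card = h ∧ ((pickF h X : Finset ℕ) : Set ℕ).Pairwise (fun a b => ¬ desc a b) ∧
      ∀ u ∈ pickF h X, u ∈ X := by
  rw [pickF, dif_pos hX]
  exact hX.choose_spec

/-- Canonical list of the cells of node `m`, ordered lexicographically. -/
noncomputable def lexCells (h k : ℕ) (m : ℕ) : List (Cell h k) :=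
  if hm : 1 ≤ m ∧ m < 2 ^ (h - 1) then
    (List.finRange (k * k)).map (fun i =>
      Sum.inr (⟨m - 1, by omega⟩,
        ⟨i.val / k, by
          have hi := i.isLt
          have hk : 0 < k := by
            rcases Nat.eq_zero_or_pos k with rfl | hp
            · simp at hi
            · exact hp
          exact (Nat.div_lt_iff_lt_mul hk).2 hi⟩,
        ⟨i.val % k, by
          have hi := i.isLt
          have hk : 0 < k := by
            rcases Nat.eq_zero_or_pos k with rfl | hp
            · simp at hi
            · exact hp
          exact Nat.mod_lt _ hk⟩))
  else if hm' : 2 ^ (h - 1) ≤ m ∧ m < 2 ^ h then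
    [Sum.inl ⟨m - 2 ^ (h - 1), by
      have h2 : 2 ^ h ≤ 2 * 2 ^ (h - 1) := by
        rcases Nat.eq_zero_or_pos h with rfl | hp
        · simp at hm'; omega
        · rw [two_pow_h hp]
      omega⟩]
  else []

/-- The lexicographic position of the thrifty cell of node `m`. -/
noncomputable def posIdx (I : TEPInput h k) (m : ℕ) : ℕ :=
  if m < 2 ^ (h - 1) then
    k * (nodeVal h k I (2 * m)).val + (nodeVal h k I (2 * m + 1)).val
  else 0

/-- Total number of cells. -/
def NN (h k : ℕ) : ℕ := 2 ^ (h - 1) + k * k * (2 ^ (h - 1) - 1)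

lemma length_lexCells {m : ℕ} (hm1 : 1 ≤ m) (hm2 : m < 2 ^ h) :
    (lexCells h k m).length = if m < 2 ^ (h - 1) then k * k else 1 := by
  by_cases hi : 1 ≤ m ∧ m < 2 ^ (h - 1)
  · rw [lexCells, dif_pos hi, if_pos hi.2]
    simp
  · have hle : 2 ^ (h - 1) ≤ m := by omega
    rw [lexCells, dif_neg hi, dif_pos ⟨hle, hm2⟩, if_neg (by omega)]
    rfl

lemma posIdx_lt {I : TEPInput h k} {m : ℕ} (hk : 0 < k) (hm1 : 1 ≤ m) (hm2 : m < 2 ^ h) :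
    posIdx I m < (lexCells h k m).length := by
  rw [length_lexCells hm1 hm2, posIdx]
  by_cases hi : m < 2 ^ (h - 1)
  · rw [if_pos hi, if_pos hi]
    have h1 := (nodeVal h k I (2 * m)).isLt
    have h2 := (nodeVal h k I (2 * m + 1)).isLt
    nlinarith
  · rw [if_neg hi, if_neg hi]
    norm_num

namespace Setup

variable (S : Setup h k)

def goodAt (I : TEPInput h k) (s : ℕ) : Prop :=
  ∃ F : Finset ℕ, F.card = h ∧ (↑F : Set ℕ).Pairwise (fun a b => ¬ desc a b) ∧
    ∀ u ∈ F, S.memC I s u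

lemma exists_goodAt (I : TEPInput h k) : ∃ s, S.goodAt I s := by
  obtain ⟨s, F, h1, h2, h3⟩ := S.bottleneck I
  exact ⟨s, F, h1, h3, h2⟩

/-- The critical time. -/
noncomputable def ss (I : TEPInput h k) : ℕ := Nat.find (S.exists_goodAt I)

/-- The saved antichain. -/
noncomputable def SF (I : TEPInput h k) : Finset ℕ :=
  pickF h {u | S.memC I (S.ss I) u}

lemma SF_spec (I : TEPInput h k) :
    (S.SF I).card = h ∧ ((S.SF I : Finset ℕ) : Set ℕ).Pairwise (fun a b => ¬ desc a b) ∧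
      ∀ u ∈ S.SF I, S.memC I (S.ss I) u := by
  have hgood : S.goodAt I (S.ss I) := Nat.find_spec (S.exists_goodAt I)
  obtain ⟨F, h1, h2, h3⟩ := hgood
  exact pickF_spec ⟨F, h1, h2, h3⟩

lemma ss_lt_TT (I : TEPInput h k) : S.ss I < S.TT I := by
  obtain ⟨hcard, _, hmem⟩ := S.SF_spec I
  have hne : (S.SF I).Nonempty := by
    rw [← Finset.card_pos, hcard]
    have := S.hh; omega
  obtain ⟨u, hu⟩ := hne
  exact S.memC_lt_TT (hmem u hu)

/-- Length of the critical suffix. -/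
noncomputable def LL (I : TEPInput h k) : ℕ := S.TT I - S.ss I

/-- Node queried at offset `δ` after the critical time. -/
noncomputable def qOff (I : TEPInput h k) (δ : ℕ) : ℕ := S.qn I (S.ss I + δ)

/-- Node `n` has been "recorded" before offset `δ` (its parent was queried). -/
def recB (I : TEPInput h k) (δ n : ℕ) : Prop := ∃ δ' < δ, S.parentQ I (S.ss I + δ') n

/-- At offset `δ` a fresh unrecorded node is queried: its value is consumed from
the advice string. -/
def consume (I : TEPInput h k) (δ : ℕ) : Prop :=
  δ < S.LL I ∧ (∀ δ' < δ, S.qOff I δ' ≠ S.qOff I δ) ∧ ¬ S.recB I δ (S.qOff I δ)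

noncomputable def cw (I : TEPInput h k) : ℕ → List (Fin k)
  | 0 => []
  | δ + 1 => cw I δ ++ (if S.consume I δ then [nodeVal h k I (S.qOff I δ)] else [])

lemma cw_succ (I : TEPInput h k) (δ : ℕ) :
    S.cw I (δ + 1) = S.cw I δ ++ (if S.consume I δ then [nodeVal h k I (S.qOff I δ)] else []) :=
  rfl

/-- The set of nodes consumed along the suffix. -/
noncomputable def Wset (I : TEPInput h k) : Finset ℕ :=
  ((Finset.range (S.LL I)).filter (fun δ => S.consume I δ)).image (fun δ => S.qOff I δ)

noncomputable def WS (I : TEPInput h k) : Finset ℕ := S.Wset I ∪ S.SF I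

/-- The block of advice symbols contributed by node `m`. -/
noncomputable def block (I : TEPInput h k) (m : ℕ) : List (Fin k) :=
  if m ∈ S.WS I then ((lexCells h k m).map (cellVal I)).eraseIdx (posIdx I m)
  else (lexCells h k m).map (cellVal I)

noncomputable def zl (I : TEPInput h k) : List (Fin k) :=
  ((List.range (2 ^ h - 1)).map (fun j => S.block I (j + 1))).flatten

noncomputable def bigL (I : TEPInput h k) : List (Fin k) := S.cw I (S.LL I) ++ S.zl I

noncomputable def adv (I : TEPInput h k) : Fin (NN h k - h) → Fin k :=
  fun i => (S.bigL I).getD i ⟨0, by have := S.hk; omega⟩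

end Setup

end TEPLB

namespace TEPLB

open scoped Classical

variable {h k : ℕ}

lemma list_range_map_sum (f : ℕ → ℕ) (n : ℕ) :
    ((List.range n).map f).sum = ∑ j ∈ Finset.range n, f j := by
  induction n with
  | zero => simp
  | succ n ih => rw [List.range_succ, Finset.sum_range_succ, List.map_append, List.sum_append, ih]; simp

lemma h_le_two_pow (hh : 1 ≤ h) : h ≤ 2 ^ (h - 1) := by
  have := Nat.lt_two_pow_self (n := h - 1)
  omega

namespace Setup

variable (S : Setup h k)

lemma qOff_bounds {I : TEPInput h k} {δ : ℕ} (hδ : δ < S.LL I) :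
    1 ≤ S.qOff I δ ∧ S.qOff I δ < 2 ^ h := by
  have : S.ss I + δ < S.TT I := by
    have := S.ss_lt_TT I
    simp only [LL] at hδ
    omega
  exact S.qn_bounds this

lemma Wset_bounds {I : TEPInput h k} {u : ℕ} (hu : u ∈ S.Wset I) :
    1 ≤ u ∧ u < 2 ^ h := by
  simp only [Wset, Finset.mem_image, Finset.mem_filter, Finset.mem_range] at hu
  obtain ⟨δ, ⟨hδ, _⟩, rfl⟩ := hu
  exact S.qOff_bounds hδ

lemma WS_bounds {I : TEPInput h k} {u : ℕ} (hu : u ∈ S.WS I) :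
    1 ≤ u ∧ u < 2 ^ h := by
  rcases Finset.mem_union.1 hu with hu | hu
  · exact S.Wset_bounds hu
  · have := S.memC_bounds ((S.SF_spec I).2.2 u hu)
    omega

lemma disjoint_Wset_SF (I : TEPInput h k) : Disjoint (S.Wset I) (S.SF I) := by
  rw [Finset.disjoint_left]
  intro u huW huS
  have hmem := (S.SF_spec I).2.2 u huS
  obtain ⟨Lq, hssLq, hpq, hint⟩ := hmem
  simp only [Wset, Finset.mem_image, Finset.mem_filter, Finset.mem_range] at huW
  obtain ⟨δ, ⟨hδLL, hcons⟩, hqoff⟩ := huW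
  set δq := Lq - S.ss I with hδq
  have hLq : Lq = S.ss I + δq := by omega
  have hpu : ∃ p x y, S.lab I Lq = .internal p x y ∧ (u = 2 * p ∨ u = 2 * p + 1) := hpq.2
  rcases Nat.lt_trichotomy δq δ with hlt | heq | hgt
  · exact hcons.2.2 (hqoff ▸ ⟨δq, hlt, hLq ▸ hpq⟩)
  · obtain ⟨p, x, y, hlabq, hup⟩ := hpu
    have : S.qOff I δ = p := by
      rw [← heq]
      simp only [qOff, qn, ← hLq, hlabq, qnode]
    have h2u : 2 ≤ u := (S.parentQ_bounds hpq).1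
    omega
  · apply hint (S.ss I + δ) (by omega) (by omega)
    exact hqoff
lemma cw_length (I : TEPInput h k) (δ : ℕ) :
    (S.cw I δ).length = ((Finset.range δ).filter (fun x => S.consume I x)).card := by
  induction δ with
  | zero => simp [cw]
  | succ δ ih =>
    rw [S.cw_succ, List.length_append, ih, Finset.range_add_one, Finset.filter_insert]
    by_cases hc : S.consume I δ
    · rw [if_pos hc, if_pos hc, Finset.card_insert_of_notMem (by simp)]
      simp
    · rw [if_neg hc, if_neg hc]
      simp

lemma Wset_card (I : TEPInput h k) :
    (S.Wset I).card = ((Finset.range (S.LL I)).filter (fun x => S.consume I x)).card := by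
  apply Finset.card_image_of_injOn
  intro δ1 h1 δ2 h2 heq
  simp only [Finset.coe_filter, Finset.mem_range, Set.mem_setOf_eq] at h1 h2
  by_contra hne
  rcases Nat.lt_or_ge δ1 δ2 with hlt | hge
  · exact h2.2.2.1 δ1 hlt heq
  · exact h1.2.2.1 δ2 (by omega) heq.symm

lemma WS_card (I : TEPInput h k) : (S.WS I).card = (S.Wset I).card + h := by
  rw [WS, Finset.card_union_of_disjoint (S.disjoint_Wset_SF I), (S.SF_spec I).1]

lemma block_length {I : TEPInput h k} {m : ℕ} (hm1 : 1 ≤ m) (hm2 : m < 2 ^ h) :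
    (S.block I m).length + (if m ∈ S.WS I then 1 else 0)
      = (if m < 2 ^ (h - 1) then k * k else 1) := by
  have hk0 : 0 < k := by have := S.hk; omega
  have hpos := posIdx_lt (I := I) hk0 hm1 hm2
  have hlen : ((lexCells h k m).map (cellVal I)).length = (lexCells h k m).length :=
    List.length_map _
  rw [block]
  by_cases hmem : m ∈ S.WS I
  · rw [if_pos hmem, if_pos hmem]
    rw [List.length_eraseIdx_of_lt (by rw [hlen]; exact hpos), hlen, ← length_lexCells hm1 hm2]
    omega
  · rw [if_neg hmem, if_neg hmem, hlen, length_lexCells hm1 hm2]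
    omega

lemma sum_sizes (hh : 1 ≤ h) (k : ℕ) : ∑ j ∈ Finset.range (2 ^ h - 1),
    (if j + 1 < 2 ^ (h - 1) then k * k else 1) = NN h k := by
  have h2 : 2 ^ h = 2 * 2 ^ (h - 1) := two_pow_h hh
  have hL : 1 ≤ 2 ^ (h - 1) := Nat.two_pow_pos _
  rw [Finset.range_eq_Ico,
    ← Finset.sum_Ico_consecutive _ (Nat.zero_le (2 ^ (h - 1) - 1)) (by omega)]
  have e1 : ∑ j ∈ Finset.Ico 0 (2 ^ (h - 1) - 1),
      (if j + 1 < 2 ^ (h - 1) then k * k else 1) = (2 ^ (h - 1) - 1) * (k * k) := by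
    have hcg : ∀ j ∈ Finset.Ico 0 (2 ^ (h - 1) - 1),
        (if j + 1 < 2 ^ (h - 1) then k * k else 1) = k * k := by
      intro j hj
      rw [Finset.mem_Ico] at hj
      rw [if_pos (by omega)]
    rw [Finset.sum_congr rfl hcg, Finset.sum_const, smul_eq_mul, Nat.card_Ico, Nat.sub_zero]
  have e2 : ∑ j ∈ Finset.Ico (2 ^ (h - 1) - 1) (2 ^ h - 1),
      (if j + 1 < 2 ^ (h - 1) then k * k else 1) = 2 ^ (h - 1) := by
    have hcg : ∀ j ∈ Finset.Ico (2 ^ (h - 1) - 1) (2 ^ h - 1),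
        (if j + 1 < 2 ^ (h - 1) then k * k else 1) = 1 := by
      intro j hj
      rw [Finset.mem_Ico] at hj
      rw [if_neg (by omega)]
    rw [Finset.sum_congr rfl hcg, Finset.sum_const, smul_eq_mul, Nat.card_Ico, Nat.mul_one]
    omega
  rw [e1, e2, NN]
  have : (2 ^ (h - 1) - 1) * (k * k) = k * k * (2 ^ (h - 1) - 1) := by ring
  omega

lemma WS_card_sum (I : TEPInput h k) :
    ∑ j ∈ Finset.range (2 ^ h - 1), (if j + 1 ∈ S.WS I then 1 else 0) = (S.WS I).card := by
  have h2 : 2 ^ h = 2 * 2 ^ (h - 1) := two_pow_h S.hh1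
  have hL : 1 ≤ 2 ^ (h - 1) := Nat.two_pow_pos _
  have : ∑ j ∈ Finset.range (2 ^ h - 1), (if j + 1 ∈ S.WS I then 1 else 0)
      = ((Finset.range (2 ^ h - 1)).filter (fun j => j + 1 ∈ S.WS I)).card := by
    rw [Finset.card_filter]
  rw [this]
  apply Finset.card_bij (fun j _ => j + 1)
  · intro j hj
    exact (Finset.mem_filter.1 hj).2
  · intro j1 h1 j2 h2 he
    omega
  · intro u hu
    obtain ⟨hu1, hu2⟩ := S.WS_bounds hu
    refine ⟨u - 1, ?_, by omega⟩
    rw [Finset.mem_filter, Finset.mem_range]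
    constructor
    · omega
    · rw [show u - 1 + 1 = u by omega]
      exact hu

lemma zl_length (I : TEPInput h k) : (S.zl I).length + (S.WS I).card = NN h k := by
  have hlen : (S.zl I).length = ∑ j ∈ Finset.range (2 ^ h - 1), (S.block I (j + 1)).length := by
    rw [zl, List.length_flatten, List.map_map, list_range_map_sum]
    rfl
  rw [hlen, ← S.WS_card_sum I, ← Finset.sum_add_distrib]
  rw [← sum_sizes S.hh1 k]
  apply Finset.sum_congr rfl
  intro j hj
  rw [Finset.mem_range] at hj
  exact S.block_length (by omega) (by omega)

lemma bigL_length_add (I : TEPInput h k) : (S.bigL I).length + h = NN h k := by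
  rw [bigL, List.length_append, S.cw_length, ← S.Wset_card I]
  have := S.zl_length I
  have := S.WS_card I
  omega

lemma NN_ge_h (hh : 1 ≤ h) (k : ℕ) : h ≤ NN h k := by
  have h1 := h_le_two_pow hh
  rw [NN]; omega

lemma bigL_length (I : TEPInput h k) : (S.bigL I).length = NN h k - h := by
  have := S.bigL_length_add I
  omega

end Setup

end TEPLB

namespace TEPLB

open scoped Classical

variable {h k : ℕ}

namespace Setup

variable (S : Setup h k)

lemma cw_stab (I : TEPInput h k) {δ δ₂ : ℕ} (hle : δ ≤ δ₂) :
    (S.cw I δ).IsPrefix (S.cw I δ₂) := by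
  induction δ₂ with
  | zero =>
    have : δ = 0 := by omega
    subst this; exact List.prefix_refl _
  | succ δ₂ ih =>
    rcases Nat.eq_or_lt_of_le hle with rfl | hlt
    · exact List.prefix_refl _
    · exact (ih (by omega)).trans (by rw [S.cw_succ]; exact List.prefix_append _ _)

lemma lt_TT_of_lt_LL {I : TEPInput h k} {δ : ℕ} (hδ : δ < S.LL I) :
    S.ss I + δ < S.TT I := by
  have := S.ss_lt_TT I
  simp only [LL] at hδ
  omega

/-- Reading the advice string at a consumption step. -/
lemma bigL_consume {I : TEPInput h k} {δ : ℕ} (hc : S.consume I δ) :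
    (S.bigL I).getD (S.cw I δ).length ⟨0, by have := S.hk; omega⟩
      = nodeVal h k I (S.qOff I δ) ∧ (S.cw I δ).length < NN h k - h := by
  have hδ : δ < S.LL I := hc.1
  have hpre : (S.cw I (δ + 1)).IsPrefix (S.cw I (S.LL I)) := S.cw_stab I (by omega)
  have hsucc : S.cw I (δ + 1) = S.cw I δ ++ [nodeVal h k I (S.qOff I δ)] := by
    rw [S.cw_succ, if_pos hc]
  obtain ⟨rest, hrest⟩ := hpre
  have hlenlt : (S.cw I δ).length < (S.cw I (S.LL I)).length := by
    rw [← hrest, hsucc]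
    simp
  have hget : (S.cw I (S.LL I))[(S.cw I δ).length]? = some (nodeVal h k I (S.qOff I δ)) := by
    rw [← hrest, hsucc]
    rw [List.getElem?_append_left (by simp), List.getElem?_append_right (le_refl _)]
    simp
  have hlenbig : (S.cw I δ).length < NN h k - h := by
    have h1 : (S.cw I (S.LL I)).length ≤ (S.bigL I).length := by
      rw [bigL, List.length_append]; omega
    have h2 := S.bigL_length I
    omega
  constructor
  · rw [List.getD_eq_getElem?_getD, bigL, List.getElem?_append_left hlenlt, hget]
    rfl
  · exact hlenbig

end Setup

end TEPLB

namespace TEPLB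

namespace Setup

open scoped Classical

variable {h k : ℕ} (S : Setup h k)

lemma phase1_main {I I' : TEPInput h k}
    (hγ : S.run I (S.ss I) = S.run I' (S.ss I'))
    (hadv : S.adv I = S.adv I') :
    ∀ δ, δ ≤ min (S.LL I) (S.LL I') →
      (∀ δ' ≤ δ, S.run I (S.ss I + δ') = S.run I' (S.ss I' + δ')) ∧
      (∀ δ' < δ, nodeVal h k I (S.qOff I δ') = nodeVal h k I' (S.qOff I' δ')) ∧
      S.cw I δ = S.cw I' δ := by
  intro δ
  induction δ with
  | zero =>
    intro _
    refine ⟨?_, by omega, rfl⟩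
    intro δ' hδ'
    rw [Nat.le_zero.1 hδ']
    simpa using hγ
  | succ δ ih =>
    intro hδmin
    obtain ⟨hrun, hval, hcw⟩ := ih (by omega)
    have hδI : δ < S.LL I := by omega
    have hδI' : δ < S.LL I' := by omega
    have htI : S.ss I + δ < S.TT I := S.lt_TT_of_lt_LL hδI
    have htI' : S.ss I' + δ < S.TT I' := S.lt_TT_of_lt_LL hδI'
    have hrunδ := hrun δ le_rfl
    have hlab : ∀ δ' ≤ δ, S.lab I (S.ss I + δ') = S.lab I' (S.ss I' + δ') := by
      intro δ' hδ'
      simp only [lab]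
      rw [hrun δ' hδ']
    have hqoff : ∀ δ' ≤ δ, S.qOff I δ' = S.qOff I' δ' := by
      intro δ' hδ'
      simp only [qOff, qn]
      rw [hlab δ' hδ']
    have hpq_iff : ∀ δ' ≤ δ, ∀ u,
        (S.parentQ I (S.ss I + δ') u ↔ S.parentQ I' (S.ss I' + δ') u) := by
      intro δ' hδ' u
      constructor
      · rintro ⟨_, p, x, y, hlq, hu⟩
        exact ⟨S.lt_TT_of_lt_LL (show δ' < S.LL I' by omega), p, x, y,
          by rw [← hlab δ' hδ']; exact hlq, hu⟩
      · rintro ⟨_, p, x, y, hlq, hu⟩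
        exact ⟨S.lt_TT_of_lt_LL (show δ' < S.LL I by omega), p, x, y,
          by rw [hlab δ' hδ']; exact hlq, hu⟩
    have hrecB_iff : ∀ u, (S.recB I δ u ↔ S.recB I' δ u) := by
      intro u
      constructor
      · rintro ⟨δ', hδ', hpq⟩
        exact ⟨δ', hδ', (hpq_iff δ' (by omega) u).1 hpq⟩
      · rintro ⟨δ', hδ', hpq⟩
        exact ⟨δ', hδ', (hpq_iff δ' (by omega) u).2 hpq⟩
    have hcons_iff : S.consume I δ ↔ S.consume I' δ := by
      unfold consume
      constructor
      · rintro ⟨_, hfirst, hrec⟩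
        refine ⟨hδI', ?_, ?_⟩
        · intro δ' h'
          rw [← hqoff δ' (by omega), ← hqoff δ le_rfl]
          exact hfirst δ' h'
        · rw [← hqoff δ le_rfl]
          exact fun hr => hrec ((hrecB_iff _).2 hr)
      · rintro ⟨_, hfirst, hrec⟩
        refine ⟨hδI, ?_, ?_⟩
        · intro δ' h'
          rw [hqoff δ' (by omega), hqoff δ le_rfl]
          exact hfirst δ' h'
        · rw [hqoff δ le_rfl]
          exact fun hr => hrec ((hrecB_iff _).1 hr)
    have hvalδ : nodeVal h k I (S.qOff I δ) = nodeVal h k I' (S.qOff I' δ) := by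
      by_cases hA : S.recB I δ (S.qOff I δ)
      · rw [← hqoff δ le_rfl]
        obtain ⟨δ', hδ'lt, hpq⟩ := hA
        obtain ⟨htpq, p, x, y, hlq, hu⟩ := hpq
        have hlq1 : S.B.query (S.run I (S.ss I + δ')) = BPQuery.internal p x y := hlq
        have hlq2 : S.B.query (S.run I' (S.ss I' + δ')) = BPQuery.internal p x y := by
          rw [← hrun δ' (by omega)]
          exact hlq1
        have hthrI := S.thr_run htpq hlq1
        have hthrI' := S.thr_run (S.lt_TT_of_lt_LL (show δ' < S.LL I' by omega)) hlq2
        rcases hu with he | he <;> rw [he]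
        · rw [← hthrI.1]; exact hthrI'.1
        · rw [← hthrI.2]; exact hthrI'.2
      · by_cases hB : ∃ δ' < δ, S.qOff I δ' = S.qOff I δ
        · rw [← hqoff δ le_rfl]
          obtain ⟨δ', hδ'lt, hq'⟩ := hB
          have hv := hval δ' hδ'lt
          rw [← hqoff δ' (by omega), hq'] at hv
          exact hv
        · have hconsI : S.consume I δ := by
            refine ⟨hδI, ?_, hA⟩
            intro δ' h' hq
            exact hB ⟨δ', h', hq⟩
          have hconsI' : S.consume I' δ := hcons_iff.1 hconsI
          obtain ⟨hgetI, hiltI⟩ := S.bigL_consume hconsI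
          obtain ⟨hgetI', hiltI'⟩ := S.bigL_consume hconsI'
          have hlencw : (S.cw I' δ).length = (S.cw I δ).length := by rw [hcw]
          have hadvi := congrFun hadv ⟨(S.cw I δ).length, hiltI⟩
          simp only [adv] at hadvi
          calc nodeVal h k I (S.qOff I δ)
              = (S.bigL I).getD (S.cw I δ).length ⟨0, by have := S.hk; omega⟩ := hgetI.symm
            _ = (S.bigL I').getD (S.cw I δ).length ⟨0, by have := S.hk; omega⟩ := hadvi
            _ = (S.bigL I').getD (S.cw I' δ).length ⟨0, by have := S.hk; omega⟩ := by
                rw [hlencw]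
            _ = nodeVal h k I' (S.qOff I' δ) := hgetI'
    have hansδ : S.ans I (S.ss I + δ) = S.ans I' (S.ss I' + δ) := by
      rw [S.ans_eq_nodeVal htI, S.ans_eq_nodeVal htI']
      exact hvalδ
    have hrunsucc : S.run I (S.ss I + (δ + 1)) = S.run I' (S.ss I' + (δ + 1)) := by
      have e1 : S.ss I + (δ + 1) = (S.ss I + δ) + 1 := by omega
      have e2 : S.ss I' + (δ + 1) = (S.ss I' + δ) + 1 := by omega
      rw [e1, e2, S.run_succ, S.run_succ, hrunδ]
      apply S.nxt_eq_of_edges (S.not_output_lt htI')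
      have hqv : queryVal I (S.B.query (S.run I' (S.ss I' + δ)))
          = queryVal I' (S.B.query (S.run I' (S.ss I' + δ))) := by
        have ha1 : S.ans I (S.ss I + δ)
            = queryVal I (S.B.query (S.run I' (S.ss I' + δ))) := by
          simp only [ans]
          rw [hrunδ]
        have ha2 : S.ans I' (S.ss I' + δ)
            = queryVal I' (S.B.query (S.run I' (S.ss I' + δ))) := rfl
        rw [← ha1, ← ha2]
        exact hansδ
      rw [hqv]
      exact S.edges_nxt (S.not_output_lt htI')
    refine ⟨?_, ?_, ?_⟩
    · intro δ' hδ'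
      rcases Nat.eq_or_lt_of_le hδ' with rfl | hlt
      · exact hrunsucc
      · exact hrun δ' (by omega)
    · intro δ' hδ'
      rcases Nat.lt_succ_iff_lt_or_eq.1 hδ' with hlt | rfl
      · exact hval δ' hlt
      · exact hvalδ
    · rw [S.cw_succ, S.cw_succ, hcw]
      by_cases hc : S.consume I δ
      · rw [if_pos hc, if_pos (hcons_iff.1 hc), hvalδ]
      · rw [if_neg hc, if_neg (fun hc' => hc (hcons_iff.2 hc'))]

lemma LL_eq {I I' : TEPInput h k}
    (hγ : S.run I (S.ss I) = S.run I' (S.ss I'))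
    (hadv : S.adv I = S.adv I') : S.LL I = S.LL I' := by
  rcases Nat.lt_trichotomy (S.LL I) (S.LL I') with hlt | heq | hgt
  · exfalso
    obtain ⟨hrun, _, _⟩ := S.phase1_main hγ hadv (S.LL I) (by omega)
    have hout : S.B.IsOutput (S.run I (S.ss I + S.LL I)) := by
      have : S.ss I + S.LL I = S.TT I := by
        have := S.ss_lt_TT I
        simp only [LL]
        omega
      rw [this]
      exact S.isOutput_TT I
    rw [hrun (S.LL I) le_rfl] at hout
    exact S.not_output_lt (S.lt_TT_of_lt_LL hlt) hout
  · exact heq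
  · exfalso
    obtain ⟨hrun, _, _⟩ := S.phase1_main hγ hadv (S.LL I') (by omega)
    have hout : S.B.IsOutput (S.run I' (S.ss I' + S.LL I')) := by
      have : S.ss I' + S.LL I' = S.TT I' := by
        have := S.ss_lt_TT I'
        simp only [LL]
        omega
      rw [this]
      exact S.isOutput_TT I'
    rw [← hrun (S.LL I') le_rfl] at hout
    exact S.not_output_lt (S.lt_TT_of_lt_LL hgt) hout

end Setup

end TEPLB

namespace TEPLB

open scoped Classical

variable {h k : ℕ}

lemma map_range_eq_imp {α : Type*} {n : ℕ} {f g : ℕ → α}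
    (hm : (List.range n).map f = (List.range n).map g) : ∀ j < n, f j = g j := by
  intro j hj
  rw [List.map_inj_left] at hm
  exact hm j (List.mem_range.2 hj)

lemma flatten_eq_blocks {α : Type*} :
    ∀ {as bs : List (List α)}, as.flatten = bs.flatten →
      as.map List.length = bs.map List.length → as = bs := by
  intro as
  induction as with
  | nil =>
    intro bs h1 h2
    cases bs with
    | nil => rfl
    | cons b bs => simp at h2
  | cons a as ih =>
    intro bs h1 h2
    cases bs with
    | nil => simp at h2
    | cons b bs =>
      simp only [List.map_cons, List.cons.injEq] at h2
      simp only [List.flatten_cons] at h1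
      obtain ⟨hab, hrest⟩ := List.append_inj h1 h2.1
      rw [hab, ih hrest h2.2]

lemma eq_of_eraseIdx_eq {α : Type*} {l₁ l₂ : List α} {p : ℕ} (hlen : l₁.length = l₂.length)
    (hp : p < l₁.length) (he : l₁.eraseIdx p = l₂.eraseIdx p) (hv : l₁[p] = l₂[p]) :
    l₁ = l₂ := by
  have hp2 : p < l₂.length := by omega
  rw [List.eraseIdx_eq_take_drop_succ, List.eraseIdx_eq_take_drop_succ] at he
  have hlt : (l₁.take p).length = (l₂.take p).length := by
    rw [List.length_take, List.length_take]
    omega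
  obtain ⟨h1, h2⟩ := List.append_inj he hlt
  have d1 : l₁.drop p = l₁[p] :: l₁.drop (p + 1) := List.drop_eq_getElem_cons hp
  have d2 : l₂.drop p = l₂[p] :: l₂.drop (p + 1) := List.drop_eq_getElem_cons hp2
  calc l₁ = l₁.take p ++ l₁.drop p := (List.take_append_drop p l₁).symm
    _ = l₂.take p ++ l₂.drop p := by rw [d1, d2, h1, h2, hv]
    _ = l₂ := List.take_append_drop p l₂

namespace Setup

variable (S : Setup h k)

/-- All consequences of phase 1 needed downstream. -/
lemma phase1_all {I I' : TEPInput h k}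
    (hγ : S.run I (S.ss I) = S.run I' (S.ss I'))
    (hadv : S.adv I = S.adv I') :
    S.LL I = S.LL I' ∧
    (∀ δ ≤ S.LL I, S.run I (S.ss I + δ) = S.run I' (S.ss I' + δ)) ∧
    (∀ δ < S.LL I, nodeVal h k I (S.qOff I δ) = nodeVal h k I' (S.qOff I' δ)) ∧
    S.cw I (S.LL I) = S.cw I' (S.LL I') ∧
    S.SF I = S.SF I' ∧ S.Wset I = S.Wset I' ∧
    (∀ u ∈ S.SF I, nodeVal h k I u = nodeVal h k I' u) ∧
    (∀ u ∈ S.Wset I, nodeVal h k I u = nodeVal h k I' u) := by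
  have hLL := S.LL_eq hγ hadv
  obtain ⟨hrun, hval, hcw⟩ := S.phase1_main hγ hadv (S.LL I) (by omega)
  have hqoff : ∀ δ ≤ S.LL I, S.qOff I δ = S.qOff I' δ := by
    intro δ hδ
    simp only [qOff, qn, lab]
    rw [hrun δ hδ]
  have hlab : ∀ δ < S.LL I, S.lab I (S.ss I + δ) = S.lab I' (S.ss I' + δ) := by
    intro δ hδ
    simp only [lab]
    rw [hrun δ (by omega)]
  have hmemC : ∀ u, (S.memC I (S.ss I) u ↔ S.memC I' (S.ss I') u) := by
    intro u
    constructor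
    · rintro ⟨Lq, hss, hpq, hint⟩
      have hLq : Lq < S.TT I := hpq.1
      set δq := Lq - S.ss I with hδq
      have hδqLL : δq < S.LL I := by simp only [LL]; omega
      have hLqe : Lq = S.ss I + δq := by omega
      obtain ⟨_, p, x, y, hlq, hu⟩ := hpq
      refine ⟨S.ss I' + δq, by omega,
        ⟨S.lt_TT_of_lt_LL (by omega), p, x, y, by rw [← hlab δq hδqLL, ← hLqe]; exact hlq, hu⟩, ?_⟩
      intro t' h1 h2
      set δ' := t' - S.ss I' with hδ'
      have ht'e : t' = S.ss I' + δ' := by omega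
      have hδ'lt : δ' < δq := by omega
      have := hint (S.ss I + δ') (by omega) (by omega)
      rw [ht'e]
      show S.qOff I' δ' ≠ u
      rw [← hqoff δ' (by omega)]
      exact this
    · rintro ⟨Lq, hss, hpq, hint⟩
      have hLq : Lq < S.TT I' := hpq.1
      set δq := Lq - S.ss I' with hδq
      have hδqLL : δq < S.LL I := by rw [hLL]; simp only [LL]; omega
      have hLqe : Lq = S.ss I' + δq := by omega
      obtain ⟨_, p, x, y, hlq, hu⟩ := hpq
      refine ⟨S.ss I + δq, by omega,
        ⟨S.lt_TT_of_lt_LL (by omega), p, x, y, by rw [hlab δq hδqLL, ← hLqe]; exact hlq, hu⟩, ?_⟩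
      intro t' h1 h2
      set δ' := t' - S.ss I with hδ'
      have ht'e : t' = S.ss I + δ' := by omega
      have hδ'lt : δ' < δq := by omega
      have := hint (S.ss I' + δ') (by omega) (by omega)
      rw [ht'e]
      show S.qOff I δ' ≠ u
      rw [hqoff δ' (by omega)]
      exact this
  have hSF : S.SF I = S.SF I' := by
    simp only [SF]
    congr 1
    ext u
    exact hmemC u
  have hcons_iff : ∀ δ < S.LL I, (S.consume I δ ↔ S.consume I' δ) := by
    intro δ hδ
    have hrecB : S.recB I δ (S.qOff I δ) ↔ S.recB I' δ (S.qOff I' δ) := by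
      rw [← hqoff δ (by omega)]
      constructor
      · rintro ⟨δ', h1, h2⟩
        refine ⟨δ', h1, ?_⟩
        obtain ⟨_, p, x, y, hlq, hu⟩ := h2
        exact ⟨S.lt_TT_of_lt_LL (by omega), p, x, y, by rw [← hlab δ' (by omega)]; exact hlq, hu⟩
      · rintro ⟨δ', h1, h2⟩
        refine ⟨δ', h1, ?_⟩
        obtain ⟨_, p, x, y, hlq, hu⟩ := h2
        exact ⟨S.lt_TT_of_lt_LL (by omega), p, x, y, by rw [hlab δ' (by omega)]; exact hlq, hu⟩
    constructor
    · rintro ⟨_, hfirst, hrec⟩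
      refine ⟨by omega, ?_, ?_⟩
      · intro δ' h'
        rw [← hqoff δ' (by omega), ← hqoff δ (by omega)]
        exact hfirst δ' h'
      · exact fun hr => hrec (hrecB.2 hr)
    · rintro ⟨_, hfirst, hrec⟩
      refine ⟨hδ, ?_, ?_⟩
      · intro δ' h'
        rw [hqoff δ' (by omega), hqoff δ (by omega)]
        exact hfirst δ' h'
      · exact fun hr => hrec (hrecB.1 hr)
  have hW : S.Wset I = S.Wset I' := by
    simp only [Wset]
    rw [← hLL]
    have hfil : (Finset.range (S.LL I)).filter (fun δ => S.consume I δ)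
        = (Finset.range (S.LL I)).filter (fun δ => S.consume I' δ) :=
      Finset.filter_congr (fun δ hδ => hcons_iff δ (Finset.mem_range.1 hδ))
    rw [← hfil]
    apply Finset.image_congr
    intro δ hδ
    simp only [Finset.coe_filter, Finset.mem_range, Set.mem_setOf_eq] at hδ
    exact hqoff δ (by omega)
  have hSFval : ∀ u ∈ S.SF I, nodeVal h k I u = nodeVal h k I' u := by
    intro u hu
    have hmem := (S.SF_spec I).2.2 u hu
    obtain ⟨Lq, hss, hpq, _⟩ := hmem
    obtain ⟨hLq, p, x, y, hlq, hucase⟩ := hpq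
    set δq := Lq - S.ss I with hδq
    have hδqLL : δq < S.LL I := by simp only [LL]; omega
    have hLqe : Lq = S.ss I + δq := by omega
    have hlq1 : S.B.query (S.run I (S.ss I + δq)) = BPQuery.internal p x y := by
      rw [← hLqe]; exact hlq
    have hlq2 : S.B.query (S.run I' (S.ss I' + δq)) = BPQuery.internal p x y := by
      rw [← hrun δq (by omega)]; exact hlq1
    have hthrI := S.thr_run (show S.ss I + δq < S.TT I by omega) hlq1
    have hthrI' := S.thr_run (S.lt_TT_of_lt_LL (show δq < S.LL I' by omega)) hlq2
    rcases hucase with he | he <;> rw [he]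
    · rw [← hthrI.1]; exact hthrI'.1
    · rw [← hthrI.2]; exact hthrI'.2
  have hWval : ∀ u ∈ S.Wset I, nodeVal h k I u = nodeVal h k I' u := by
    intro u hu
    simp only [Wset, Finset.mem_image, Finset.mem_filter, Finset.mem_range] at hu
    obtain ⟨δ, ⟨hδ, _⟩, rfl⟩ := hu
    have := hval δ hδ
    rw [← hqoff δ (by omega)] at this
    exact this
  exact ⟨hLL, hrun, hval, by rw [hcw, hLL], hSF, hW, hSFval, hWval⟩

end Setup

end TEPLB

namespace TEPLB

open scoped Classical

variable {h k : ℕ}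

lemma lex_get_posIdx (I : TEPInput h k) {m : ℕ} (hh : 1 ≤ h) (hk0 : 0 < k)
    (hm1 : 1 ≤ m) (hm2 : m < 2 ^ h) :
    (lexCells h k m)[posIdx I m]'(posIdx_lt hk0 hm1 hm2) = tcell I m := by
  have h2 := two_pow_h (h := h) hh
  by_cases hmi : 1 ≤ m ∧ m < 2 ^ (h - 1)
  · have hx := (nodeVal h k I (2 * m)).isLt
    have hy := (nodeVal h k I (2 * m + 1)).isLt
    have hplt : posIdx I m = k * (nodeVal h k I (2 * m)).val + (nodeVal h k I (2 * m + 1)).val := by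
      rw [posIdx, if_pos hmi.2]
    simp only [lexCells, dif_pos hmi, tcell, dif_pos hmi, List.getElem_map,
      List.getElem_finRange, hplt]
    congr 1
    refine Prod.ext rfl (Prod.ext ?_ ?_)
    · apply Fin.ext
      show (k * (nodeVal h k I (2 * m)).val + (nodeVal h k I (2 * m + 1)).val) / k = _
      rw [Nat.mul_add_div hk0, Nat.div_eq_of_lt hy, Nat.add_zero]
    · apply Fin.ext
      show (k * (nodeVal h k I (2 * m)).val + (nodeVal h k I (2 * m + 1)).val) % k = _
      rw [Nat.mul_add_mod, Nat.mod_eq_of_lt hy]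
  · have hml : 2 ^ (h - 1) ≤ m := by omega
    have hplt : posIdx I m = 0 := by rw [posIdx, if_neg (by omega)]
    simp only [lexCells, dif_neg hmi, dif_pos (⟨hml, hm2⟩ : 2 ^ (h - 1) ≤ m ∧ m < 2 ^ h),
      tcell, dif_neg hmi, hplt, List.getElem_singleton]
    congr 1
    apply Fin.ext
    show m - 2 ^ (h - 1) = (m - 2 ^ (h - 1)) % 2 ^ (h - 1)
    rw [Nat.mod_eq_of_lt (by omega)]

lemma tcell_mem_lexCells (I : TEPInput h k) {m : ℕ} (hh : 1 ≤ h) (hk0 : 0 < k)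
    (hm1 : 1 ≤ m) (hm2 : m < 2 ^ h) : tcell I m ∈ lexCells h k m := by
  rw [← lex_get_posIdx I hh hk0 hm1 hm2]
  exact List.getElem_mem _

lemma inl_mem_lexCells (hh : 1 ≤ h) (j : Fin (2 ^ (h - 1))) :
    (Sum.inl j : Cell h k) ∈ lexCells h k (2 ^ (h - 1) + j.val) := by
  have h2 := two_pow_h (h := h) hh
  have hj := j.isLt
  have hni : ¬ (1 ≤ 2 ^ (h - 1) + j.val ∧ 2 ^ (h - 1) + j.val < 2 ^ (h - 1)) := by omega
  rw [lexCells, dif_neg hni, dif_pos (by omega)]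
  rw [List.mem_singleton]
  congr 1
  apply Fin.ext
  show j.val = 2 ^ (h - 1) + j.val - 2 ^ (h - 1)
  omega

lemma inr_mem_lexCells (hk0 : 0 < k) (j : Fin (2 ^ (h - 1) - 1)) (x y : Fin k) :
    (Sum.inr (j, x, y) : Cell h k) ∈ lexCells h k (j.val + 1) := by
  have hj := j.isLt
  have hii : 1 ≤ j.val + 1 ∧ j.val + 1 < 2 ^ (h - 1) := by omega
  rw [lexCells, dif_pos hii]
  rw [List.mem_map]
  refine ⟨⟨k * x.val + y.val, by nlinarith [x.isLt, y.isLt]⟩, List.mem_finRange _, ?_⟩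
  congr 1
  refine Prod.ext (by apply Fin.ext; show j.val + 1 - 1 = j.val; omega) (Prod.ext ?_ ?_)
  · apply Fin.ext
    show (k * x.val + y.val) / k = x.val
    rw [Nat.mul_add_div hk0, Nat.div_eq_of_lt y.isLt, Nat.add_zero]
  · apply Fin.ext
    show (k * x.val + y.val) % k = y.val
    rw [Nat.mul_add_mod, Nat.mod_eq_of_lt y.isLt]

end TEPLB

namespace TEPLB

open scoped Classical

variable {h k : ℕ}

lemma phase2 (S : Setup h k) {I I' : TEPInput h k}
    (hblocks : ∀ m', 1 ≤ m' → m' < 2 ^ h → S.block I m' = S.block I' m')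
    (hWS : S.WS I = S.WS I')
    (hWSval : ∀ u ∈ S.WS I, nodeVal h k I u = nodeVal h k I' u)
    (m : ℕ) (hm1 : 1 ≤ m) (hm2 : m < 2 ^ h) :
    (∀ c ∈ lexCells h k m, cellVal I c = cellVal I' c) ∧
      nodeVal h k I m = nodeVal h k I' m := by
  have hh : 1 ≤ h := S.hh1
  have hk0 : 0 < k := by have := S.hk; omega
  have h2 := two_pow_h (h := h) hh
  have hchild : m < 2 ^ (h - 1) →
      nodeVal h k I (2 * m) = nodeVal h k I' (2 * m) ∧
      nodeVal h k I (2 * m + 1) = nodeVal h k I' (2 * m + 1) := by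
    intro hmi
    exact ⟨(phase2 S hblocks hWS hWSval (2 * m) (by omega) (by omega)).2,
      (phase2 S hblocks hWS hWSval (2 * m + 1) (by omega) (by omega)).2⟩
  have htc : tcell I m = tcell I' m := by
    by_cases hmi : 1 ≤ m ∧ m < 2 ^ (h - 1)
    · obtain ⟨e1, e2⟩ := hchild hmi.2
      rw [tcell, tcell, dif_pos hmi, dif_pos hmi, e1, e2]
    · rw [tcell, tcell, dif_neg hmi, dif_neg hmi]
  have hpos : posIdx I m = posIdx I' m := by
    by_cases hmi : m < 2 ^ (h - 1)
    · obtain ⟨e1, e2⟩ := hchild hmi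
      rw [posIdx, posIdx, if_pos hmi, if_pos hmi, e1, e2]
    · rw [posIdx, posIdx, if_neg hmi, if_neg hmi]
  have hbm := hblocks m hm1 hm2
  have hplt : posIdx I m < ((lexCells h k m).map (cellVal I)).length := by
    rw [List.length_map]; exact posIdx_lt hk0 hm1 hm2
  have hplt' : posIdx I m < ((lexCells h k m).map (cellVal I')).length := by
    rw [List.length_map]; exact posIdx_lt hk0 hm1 hm2
  have hcells : ∀ c ∈ lexCells h k m, cellVal I c = cellVal I' c := by
    by_cases hmWS : m ∈ S.WS I
    · have hvm := hWSval m hmWS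
      rw [Setup.block, Setup.block, if_pos hmWS, if_pos (hWS ▸ hmWS), ← hpos] at hbm
      have o1 : ((lexCells h k m).map (cellVal I))[posIdx I m]?
          = some (nodeVal h k I m) := by
        rw [List.getElem?_eq_getElem hplt]
        rw [List.getElem_map, lex_get_posIdx I hh hk0 hm1 hm2, cellVal_tcell I hm1]
      have o2 : ((lexCells h k m).map (cellVal I'))[posIdx I' m]?
          = some (nodeVal h k I' m) := by
        rw [List.getElem?_eq_getElem (by rw [hpos] at hplt'; exact hplt')]
        rw [List.getElem_map, lex_get_posIdx I' hh hk0 hm1 hm2, cellVal_tcell I' hm1]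
      rw [← hpos] at o2
      have hsome : ((lexCells h k m).map (cellVal I))[posIdx I m]?
          = ((lexCells h k m).map (cellVal I'))[posIdx I m]? := by
        rw [o1, o2, hvm]
      have hvp : ((lexCells h k m).map (cellVal I))[posIdx I m]'hplt
          = ((lexCells h k m).map (cellVal I'))[posIdx I m]'hplt' := by
        rw [List.getElem?_eq_getElem hplt, List.getElem?_eq_getElem hplt',
          Option.some_inj] at hsome
        exact hsome
      have hvals : (lexCells h k m).map (cellVal I) = (lexCells h k m).map (cellVal I') :=
        eq_of_eraseIdx_eq (by rw [List.length_map, List.length_map]) hplt hbm hvp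
      exact fun c hc => List.map_inj_left.1 hvals c hc
    · have hmWS' : m ∉ S.WS I' := by rw [← hWS]; exact hmWS
      rw [Setup.block, Setup.block, if_neg hmWS, if_neg hmWS'] at hbm
      exact fun c hc => List.map_inj_left.1 hbm c hc
  refine ⟨hcells, ?_⟩
  rw [← cellVal_tcell I hm1, ← cellVal_tcell I' hm1, ← htc]
  exact hcells (tcell I m) (tcell_mem_lexCells I hh hk0 hm1 hm2)
termination_by 2 ^ h - m
decreasing_by
  · omega
  · omega

end TEPLB

namespace TEPLB

open scoped Classical

variable {h k : ℕ}

namespace Setup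

variable (S : Setup h k)

/-- Injectivity of the advice map. -/
lemma inputs_eq {I I' : TEPInput h k}
    (hγ : S.run I (S.ss I) = S.run I' (S.ss I'))
    (hadv : S.adv I = S.adv I') : I = I' := by
  obtain ⟨hLL, hrun, hval, hcwLL, hSF, hW, hSFval, hWval⟩ := S.phase1_all hγ hadv
  have hWS : S.WS I = S.WS I' := by rw [WS, WS, hSF, hW]
  have hWSval : ∀ u ∈ S.WS I, nodeVal h k I u = nodeVal h k I' u := by
    intro u hu
    rcases Finset.mem_union.1 hu with hu | hu
    · exact hWval u hu
    · exact hSFval u hu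
  have hh : 1 ≤ h := S.hh1
  have hk0 : 0 < k := by have := S.hk; omega
  have h2 := two_pow_h (h := h) hh
  have hlen : (S.bigL I).length = (S.bigL I').length := by
    rw [S.bigL_length, S.bigL_length]
  have hbig : S.bigL I = S.bigL I' := by
    apply List.ext_getElem hlen
    intro i h1 h2'
    have hiNN : i < NN h k - h := by rw [S.bigL_length I] at h1; exact h1
    have hfi := congrFun hadv ⟨i, hiNN⟩
    simp only [adv] at hfi
    rw [List.getD_eq_getElem _ _ h1, List.getD_eq_getElem _ _ h2'] at hfi
    exact hfi
  have hzl : S.zl I = S.zl I' :=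
    (List.append_inj hbig (by rw [hcwLL])).2
  have hblocks : ∀ m', 1 ≤ m' → m' < 2 ^ h → S.block I m' = S.block I' m' := by
    have hmapeq : (List.range (2 ^ h - 1)).map (fun j => S.block I (j + 1))
        = (List.range (2 ^ h - 1)).map (fun j => S.block I' (j + 1)) := by
      apply flatten_eq_blocks hzl
      rw [List.map_map, List.map_map]
      apply List.map_congr_left
      intro j hj
      rw [List.mem_range] at hj
      have hb1 := S.block_length (I := I) (m := j + 1) (by omega) (by omega)
      have hb2 := S.block_length (I := I') (m := j + 1) (by omega) (by omega)
      rw [← hWS] at hb2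
      simp only [Function.comp_apply]
      omega
    intro m' hm1 hm2
    have := map_range_eq_imp hmapeq (m' - 1) (by omega)
    rw [show m' - 1 + 1 = m' by omega] at this
    exact this
  have hcells := fun m hm1 hm2 => (phase2 S hblocks hWS hWSval m hm1 hm2).1
  have h1eq : I.1 = I'.1 := by
    funext j
    exact hcells (2 ^ (h - 1) + j.val) (by omega) (by have := j.isLt; omega)
      (Sum.inl j) (inl_mem_lexCells hh j)
  have h2eq : I.2 = I'.2 := by
    funext j x y
    have hj := j.isLt
    exact hcells (j.val + 1) (by omega) (by omega)
      (Sum.inr (j, x, y)) (inr_mem_lexCells hk0 j x y)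
  exact Prod.ext h1eq h2eq

/-- The counting argument. -/
lemma setup_bound : k ^ h ≤ S.B.size := by
  classical
  letI : Fintype S.B.State := S.B.fintype
  have hinj : Function.Injective
      (fun I : TEPInput h k => (S.run I (S.ss I), S.adv I)) := by
    intro I I' hθ
    exact S.inputs_eq (congrArg Prod.fst hθ) (congrArg Prod.snd hθ)
  have hcard := Fintype.card_le_of_injective _ hinj
  have hc1 : Fintype.card (TEPInput h k) = k ^ (NN h k) := by
    rw [show Fintype.card (TEPInput h k)
        = Fintype.card (Fin (2 ^ (h - 1)) → Fin k)
          * Fintype.card (Fin (2 ^ (h - 1) - 1) → Fin k → Fin k → Fin k) from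
      Fintype.card_prod _ _]
    rw [Fintype.card_fun, Fintype.card_fun, Fintype.card_fun, Fintype.card_fun]
    simp only [Fintype.card_fin]
    rw [← pow_mul, ← pow_mul, ← pow_add]
    congr 1
    rw [NN]
    ring
  have hc2 : Fintype.card (S.B.State × (Fin (NN h k - h) → Fin k))
      = S.B.size * k ^ (NN h k - h) := by
    rw [Fintype.card_prod, Fintype.card_fun]
    simp only [Fintype.card_fin]
    rfl
  rw [hc1, hc2] at hcard
  have hNNh : h ≤ NN h k := NN_ge_h S.hh1 k
  have hsplit : k ^ (NN h k) = k ^ (NN h k - h) * k ^ h := by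
    rw [← pow_add]
    congr 1
    omega
  rw [hsplit, Nat.mul_comm S.B.size] at hcard
  have hpos : 0 < k ^ (NN h k - h) := Nat.pow_pos (by have := S.hk; omega)
  exact Nat.le_of_mul_le_mul_left hcard hpos

end Setup

end TEPLB

/-- Every deterministic thrifty branching program solving `TEP^h_2(k)` has at
least `k^h` states. -/
theorem deterministic_thrifty_lower_bound (h k : ℕ) (hh : 1 ≤ h) (B : BP h k)
    (hdet : B.Deterministic) (hsol : B.Solves) (hthr : B.Thrifty) :
    k ^ h ≤ B.size := by
  classical
  rcases Nat.lt_or_ge k 2 with hk | hk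
  · interval_cases k
    · rw [Nat.zero_pow (by omega : 0 < h)]
      exact Nat.zero_le _
    · have hpos : 0 < B.size := by
        rw [BP.size]
        exact @Fintype.card_pos _ B.fintype ⟨B.start⟩
      rw [Nat.one_pow]; exact hpos
  · rcases Nat.lt_or_ge h 2 with hh2 | hh2
    · have hh1 : h = 1 := by omega
      subst hh1
      have := @Fintype.card_le_of_injective (Fin k) B.State _ B.fintype B.out B.out_inj
      rw [Fintype.card_fin] at this
      simpa [BP.size] using this
    · exact TEPLB.Setup.setup_bound ⟨B, hdet, hsol, hthr, hh2, hk⟩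
end

section
/- Let B be a deterministic thrifty branching program solving TEP^h_2(k) with k ≥ 2, let I be an input, and let C(I) be its (unique, complete) computation path. Then for every node i of T^h_2 there is at least one state on C(I) that queries node i (a state labelled v_i if i is a leaf, or f_i(x,y) for some x,y if i is internal); moreover, for every non-root node i, some query to i occurs strictly before the first query to the parent of i on C(I). -/
section AuxPerturb

open scoped Classical

/-- `j` is an ancestor of `i` (or equal to `i`) in heap numbering. -/
def Anc (i j : ℕ) : Prop := ∃ n, i / 2 ^ n = j

lemma anc_self (i : ℕ) : Anc i i := ⟨0, by simp⟩

lemma anc_of_anc_double {i j : ℕ} (hj : Anc i (2 * j)) : Anc i j := by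
  obtain ⟨n, hn⟩ := hj
  exact ⟨n + 1, by rw [pow_succ, ← Nat.div_div_eq_div_mul, hn]; omega⟩

lemma anc_of_anc_double' {i j : ℕ} (hj : Anc i (2 * j + 1)) : Anc i j := by
  obtain ⟨n, hn⟩ := hj
  exact ⟨n + 1, by rw [pow_succ, ← Nat.div_div_eq_div_mul, hn]; omega⟩

/-- Cyclic successor on `Fin k`. -/
def finSucc {k : ℕ} (a : Fin k) : Fin k :=
  ⟨(a.val + 1) % k, Nat.mod_lt _ (Nat.lt_of_le_of_lt (Nat.zero_le _) a.isLt)⟩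

lemma finSucc_ne {k : ℕ} (hk : 2 ≤ k) (a : Fin k) : finSucc a ≠ a := by
  intro hEq
  have hval := congrArg Fin.val hEq
  simp only [finSucc] at hval
  have ha := a.isLt
  rcases Nat.lt_or_ge (a.val + 1) k with hlt | hge
  · rw [Nat.mod_eq_of_lt hlt] at hval; omega
  · have hE : a.val + 1 = k := by omega
    rw [hE, Nat.mod_self] at hval; omega

/-- The perturbed input: change the value of node `i` (the leaf value if `i` is a
leaf, the function value at the thrifty point if `i` is internal), and change each
strict ancestor's function at its *new* thrifty point, leaving it unchanged at the
old thrifty point. -/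
noncomputable def perturb (h k : ℕ) (I : TEPInput h k) (i : ℕ) : TEPInput h k :=
  (if 1 ≤ i ∧ i < 2 ^ (h - 1) then I.1
   else Function.update I.1
      ⟨(i - 2 ^ (h - 1)) % 2 ^ (h - 1), Nat.mod_lt _ (Nat.two_pow_pos _)⟩ (finSucc (leafValAt I i)),
   fun idx =>
     if idx.val + 1 = i then
       fun x y =>
         if x = nodeVal h k I (2 * i) ∧ y = nodeVal h k I (2 * i + 1) then finSucc (I.2 idx x y)
         else I.2 idx x y
     else if Anc i (idx.val + 1) then
       fun x y =>
         if x = nodeVal h k I (2 * (idx.val + 1)) ∧ y = nodeVal h k I (2 * (idx.val + 1) + 1) then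
           I.2 idx x y
         else
           finSucc (I.2 idx (nodeVal h k I (2 * (idx.val + 1))) (nodeVal h k I (2 * (idx.val + 1) + 1)))
     else I.2 idx)

variable {h k : ℕ} {I : TEPInput h k} {i j : ℕ}

lemma nodeVal_eq (h k : ℕ) (I : TEPInput h k) (i : ℕ) :
    nodeVal h k I i = if _ : 1 ≤ i ∧ i < 2 ^ (h - 1) then
      funcAt I i (nodeVal h k I (2 * i)) (nodeVal h k I (2 * i + 1)) else leafValAt I i := by
  conv_lhs => rw [nodeVal]

lemma leafValAt_perturb_ne (hh : 1 ≤ h) (hi : isNode h i) (hj : isLeafNode h j)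
    (hne : j ≠ i) : leafValAt (perturb h k I i) j = leafValAt I j := by
  by_cases hii : 1 ≤ i ∧ i < 2 ^ (h - 1)
  · simp [perturb, leafValAt, hii]
  · have hpow : 2 ^ h = 2 * 2 ^ (h - 1) := by
      conv_lhs => rw [show h = h - 1 + 1 by omega]
      rw [pow_succ']
    obtain ⟨hi1, hi2⟩ := hi
    obtain ⟨hj1, hj2⟩ := hj
    unfold leafValAt perturb
    simp only [if_neg hii]
    apply Function.update_of_ne
    intro hEq
    apply hne
    have hv := congrArg Fin.val hEq
    simp only at hv
    rw [Nat.mod_eq_of_lt (by omega), Nat.mod_eq_of_lt (by omega)] at hv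
    omega

lemma leafValAt_perturb_self (hii : ¬ (1 ≤ i ∧ i < 2 ^ (h - 1))) :
    leafValAt (perturb h k I i) i = finSucc (leafValAt I i) := by
  unfold leafValAt perturb
  simp only [if_neg hii]
  rw [Function.update_self]
  rfl

lemma funcAt_perturb_of_not_anc (hj1 : 1 ≤ j) (hanc : ¬ Anc i j) :
    funcAt (perturb h k I i) j = funcAt I j := by
  have hne : j ≠ i := fun hEq => hanc (hEq ▸ anc_self i)
  funext x y
  unfold funcAt
  by_cases hlt : j - 1 < 2 ^ (h - 1) - 1
  · rw [dif_pos hlt, dif_pos hlt]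
    show (perturb h k I i).2 ⟨j - 1, hlt⟩ x y = _
    simp only [perturb]
    rw [if_neg (show ¬ (j - 1 + 1 = i) by omega),
        if_neg (show ¬ Anc i (j - 1 + 1) by rw [show j - 1 + 1 = j by omega]; exact hanc)]
  · rw [dif_neg hlt, dif_neg hlt]

lemma funcAt_perturb_thrifty (hj1 : 1 ≤ j) (hne : j ≠ i) :
    funcAt (perturb h k I i) j (nodeVal h k I (2 * j)) (nodeVal h k I (2 * j + 1)) =
      funcAt I j (nodeVal h k I (2 * j)) (nodeVal h k I (2 * j + 1)) := by
  unfold funcAt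
  by_cases hlt : j - 1 < 2 ^ (h - 1) - 1
  · rw [dif_pos hlt, dif_pos hlt]
    show (perturb h k I i).2 ⟨j - 1, hlt⟩ _ _ = _
    simp only [perturb]
    rw [if_neg (show ¬ (j - 1 + 1 = i) by omega)]
    by_cases hanc : Anc i (j - 1 + 1)
    · rw [if_pos hanc]
      simp only [show j - 1 + 1 = j from by omega, and_self, if_true]
    · rw [if_neg hanc]
  · rw [dif_neg hlt, dif_neg hlt]

lemma funcAt_perturb_self (hii : 1 ≤ i ∧ i < 2 ^ (h - 1)) :
    funcAt (perturb h k I i) i (nodeVal h k I (2 * i)) (nodeVal h k I (2 * i + 1)) =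
      finSucc (funcAt I i (nodeVal h k I (2 * i)) (nodeVal h k I (2 * i + 1))) := by
  have hlt : i - 1 < 2 ^ (h - 1) - 1 := by omega
  unfold funcAt
  rw [dif_pos hlt, dif_pos hlt]
  show (perturb h k I i).2 ⟨i - 1, hlt⟩ _ _ = _
  simp only [perturb]
  rw [if_pos (show i - 1 + 1 = i by omega)]
  simp only [show i - 1 + 1 = i from by omega, and_self, if_true]

lemma funcAt_perturb_anc_new (hj1 : 1 ≤ j) (hne : j ≠ i) (hanc : Anc i j)
    (hjint : j < 2 ^ (h - 1)) {x y : Fin k}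
    (hxy : ¬ (x = nodeVal h k I (2 * j) ∧ y = nodeVal h k I (2 * j + 1))) :
    funcAt (perturb h k I i) j x y =
      finSucc (funcAt I j (nodeVal h k I (2 * j)) (nodeVal h k I (2 * j + 1))) := by
  have hlt : j - 1 < 2 ^ (h - 1) - 1 := by omega
  unfold funcAt
  rw [dif_pos hlt, dif_pos hlt]
  show (perturb h k I i).2 ⟨j - 1, hlt⟩ _ _ = _
  simp only [perturb]
  rw [if_neg (show ¬ (j - 1 + 1 = i) by omega)]
  rw [if_pos (show Anc i (j - 1 + 1) by rw [show j - 1 + 1 = j by omega]; exact hanc)]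
  simp only [show j - 1 + 1 = j from by omega]
  rw [if_neg hxy]

theorem nodeVal_perturb_of_not_anc (hh : 1 ≤ h) (I : TEPInput h k) {i : ℕ}
    (hi : isNode h i) (j : ℕ) (hj1 : 1 ≤ j) (hj2 : j < 2 ^ h) (hanc : ¬ Anc i j) :
    nodeVal h k (perturb h k I i) j = nodeVal h k I j := by
  have hpow : 2 ^ h = 2 * 2 ^ (h - 1) := by
    conv_lhs => rw [show h = h - 1 + 1 by omega]
    rw [pow_succ']
  rw [nodeVal_eq h k (perturb h k I i) j, nodeVal_eq h k I j]
  by_cases hint : 1 ≤ j ∧ j < 2 ^ (h - 1)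
  · rw [dif_pos hint, dif_pos hint]
    rw [funcAt_perturb_of_not_anc hj1 hanc,
        nodeVal_perturb_of_not_anc hh I hi (2 * j) (by omega) (by omega)
          (fun hA => hanc (anc_of_anc_double hA)),
        nodeVal_perturb_of_not_anc hh I hi (2 * j + 1) (by omega) (by omega)
          (fun hA => hanc (anc_of_anc_double' hA))]
  · rw [dif_neg hint, dif_neg hint]
    exact leafValAt_perturb_ne hh hi ⟨by omega, hj2⟩ (fun hEq => hanc (hEq ▸ anc_self i))
termination_by 2 ^ h - j
decreasing_by
  · omega
  · omega

theorem nodeVal_perturb_anc (hh : 1 ≤ h) (hk : 2 ≤ k) (I : TEPInput h k) {i : ℕ}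
    (hi : isNode h i) :
    ∀ m : ℕ, 1 ≤ i / 2 ^ m →
      nodeVal h k (perturb h k I i) (i / 2 ^ m) ≠ nodeVal h k I (i / 2 ^ m) := by
  obtain ⟨hi1, hi2⟩ := hi
  have hpow : 2 ^ h = 2 * 2 ^ (h - 1) := by
    conv_lhs => rw [show h = h - 1 + 1 by omega]
    rw [pow_succ']
  intro m
  induction m with
  | zero =>
      intro _
      simp only [pow_zero, Nat.div_one]
      by_cases hint : 1 ≤ i ∧ i < 2 ^ (h - 1)
      · rw [nodeVal_eq h k (perturb h k I i) i, nodeVal_eq h k I i, dif_pos hint, dif_pos hint]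
        have hc1 : ¬ Anc i (2 * i) := by
          rintro ⟨n, hn⟩
          have hle : i / 2 ^ n ≤ i := Nat.div_le_self _ _
          omega
        have hc2 : ¬ Anc i (2 * i + 1) := by
          rintro ⟨n, hn⟩
          have hle : i / 2 ^ n ≤ i := Nat.div_le_self _ _
          omega
        rw [nodeVal_perturb_of_not_anc hh I ⟨hi1, hi2⟩ (2 * i) (by omega) (by omega) hc1,
            nodeVal_perturb_of_not_anc hh I ⟨hi1, hi2⟩ (2 * i + 1) (by omega) (by omega) hc2,
            funcAt_perturb_self hint]
        exact finSucc_ne hk _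
      · rw [nodeVal_eq h k (perturb h k I i) i, nodeVal_eq h k I i, dif_neg hint, dif_neg hint,
            leafValAt_perturb_self hint]
        exact finSucc_ne hk _
  | succ m ih =>
      intro h1
      set j := i / 2 ^ (m + 1) with hjdef
      set c := i / 2 ^ m with hcdef
      have hcj : c / 2 = j := by
        rw [hcdef, hjdef, Nat.div_div_eq_div_mul, ← pow_succ]
      have hc1 : 1 ≤ c := by omega
      have IH := ih hc1
      have hcle : c ≤ i := Nat.div_le_self _ _
      have hjle : j ≤ i / 2 := by
        rw [hjdef]
        exact Nat.div_le_div_left (by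
          calc (2:ℕ) = 2 ^ 1 := rfl
          _ ≤ 2 ^ (m + 1) := Nat.pow_le_pow_right (by norm_num) (by omega)) (by norm_num)
      have hjint : j < 2 ^ (h - 1) := by omega
      have hji : j ≠ i := by omega
      have hsib : ∀ d, d / 2 = j → d ≠ c → ¬ Anc i d := by
        rintro d hd hdc ⟨a, ha⟩
        rcases lt_trichotomy a m with hltam | heqam | hgtam
        · have hdc2 : c = d / 2 ^ (m - a) := by
            rw [hcdef, ← ha, Nat.div_div_eq_div_mul, ← pow_add]
            congr 2
            omega
          have h2le : (2:ℕ) ≤ 2 ^ (m - a) := by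
            calc (2:ℕ) = 2 ^ 1 := rfl
            _ ≤ 2 ^ (m - a) := Nat.pow_le_pow_right (by norm_num) (by omega)
          have hdd : d / 2 ^ (m - a) ≤ d / 2 := Nat.div_le_div_left h2le (by norm_num)
          omega
        · apply hdc
          rw [← ha, heqam, ← hcdef]
        · have hdc2 : d = c / 2 ^ (a - m) := by
            rw [← ha, hcdef, Nat.div_div_eq_div_mul, ← pow_add]
            congr 2
            omega
          have h2le : (2:ℕ) ≤ 2 ^ (a - m) := by
            calc (2:ℕ) = 2 ^ 1 := rfl
            _ ≤ 2 ^ (a - m) := Nat.pow_le_pow_right (by norm_num) (by omega)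
          have hdd : c / 2 ^ (a - m) ≤ c / 2 := Nat.div_le_div_left h2le (by norm_num)
          omega
      rw [nodeVal_eq h k (perturb h k I i) j, nodeVal_eq h k I j, dif_pos ⟨h1, hjint⟩,
          dif_pos ⟨h1, hjint⟩]
      have hanc : Anc i j := ⟨m + 1, hjdef.symm⟩
      rcases (by omega : c = 2 * j ∨ c = 2 * j + 1) with hceq | hceq
      · have hd : ¬ Anc i (2 * j + 1) := hsib _ (by omega) (by omega)
        rw [nodeVal_perturb_of_not_anc hh I ⟨hi1, hi2⟩ (2 * j + 1) (by omega) (by omega) hd]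
        rw [funcAt_perturb_anc_new h1 hji hanc hjint
          (by rintro ⟨hx, -⟩; rw [← hceq] at hx; exact IH hx)]
        exact finSucc_ne hk _
      · have hd : ¬ Anc i (2 * j) := hsib _ (by omega) (by omega)
        rw [nodeVal_perturb_of_not_anc hh I ⟨hi1, hi2⟩ (2 * j) (by omega) (by omega) hd]
        rw [funcAt_perturb_anc_new h1 hji hanc hjint
          (by rintro ⟨-, hy⟩; rw [← hceq] at hy; exact IH hy)]
        exact finSucc_ne hk _

theorem nodeVal_perturb_root (hh : 1 ≤ h) (hk : 2 ≤ k) (I : TEPInput h k) {i : ℕ}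
    (hi : isNode h i) :
    nodeVal h k (perturb h k I i) 1 ≠ nodeVal h k I 1 := by
  obtain ⟨hi1, hi2⟩ := hi
  have h1 : 2 ^ Nat.log 2 i ≤ i := Nat.pow_log_le_self 2 (by omega)
  have h2 : i < 2 ^ Nat.log 2 i * 2 := by
    have := Nat.lt_pow_succ_log_self (by norm_num : 1 < 2) i
    rwa [pow_succ] at this
  have hdiv : i / 2 ^ Nat.log 2 i = 1 := by
    have ha : 1 ≤ i / 2 ^ Nat.log 2 i := (Nat.one_le_div_iff (Nat.two_pow_pos _)).mpr h1
    have hb : i / 2 ^ Nat.log 2 i < 2 :=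
      (Nat.div_lt_iff_lt_mul (Nat.two_pow_pos _)).mpr (by omega)
    omega
  have hfin := nodeVal_perturb_anc hh hk I ⟨hi1, hi2⟩ (Nat.log 2 i) (by omega)
  rwa [hdiv] at hfin

lemma queryVal_perturb (hh : 1 ≤ h) (I : TEPInput h k) {i : ℕ} (hi : isNode h i)
    (q : BPQuery k) (hwf : queryWF h q) (hni : ¬ queriesNode q i)
    (hthrifty : ∀ j xa ya, q = BPQuery.internal j xa ya →
      xa = nodeVal h k I (2 * j) ∧ ya = nodeVal h k I (2 * j + 1)) :
    queryVal (perturb h k I i) q = queryVal I q := by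
  cases q with
  | leaf j =>
      have hwf' : isLeafNode h j := hwf
      have hni' : j ≠ i := hni
      exact leafValAt_perturb_ne hh hi hwf' hni'
  | internal j xa ya =>
      obtain ⟨hx, hy⟩ := hthrifty j xa ya rfl
      subst hx
      subst hy
      have hwf' : isInternalNode h j := hwf
      have hni' : j ≠ i := hni
      exact funcAt_perturb_thrifty hwf'.1 hni'

end AuxPerturb
namespace BP

variable {h k : ℕ} {B : BP h k}

/-- The state at position `n` of a path `p` ending at `t`. -/
def stateOf (B : BP h k) (p : List (B.State × Fin k)) (t : B.State) (n : ℕ) : B.State :=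
  if h' : n < p.length then (p.get ⟨n, h'⟩).1 else t

lemma stateOf_lt {p : List (B.State × Fin k)} {t : B.State} {n : ℕ} (hn : n < p.length) :
    stateOf B p t n = (p.get ⟨n, hn⟩).1 := dif_pos hn

lemma stateOf_ge {p : List (B.State × Fin k)} {t : B.State} {n : ℕ} (hn : ¬ n < p.length) :
    stateOf B p t n = t := dif_neg hn

lemma LPath.edges_stateOf {p : List (B.State × Fin k)} {t : B.State} (hp : B.LPath p t)
    (n : ℕ) (hn : n < p.length) :
    B.edges (p.get ⟨n, hn⟩).1 (p.get ⟨n, hn⟩).2 (stateOf B p t (n + 1)) := by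
  by_cases h' : n + 1 < p.length
  · rw [stateOf_lt h']
    exact List.isChain_iff_getElem.mp hp.1 n (by omega)
  · rw [stateOf_ge h']
    apply hp.2.1
    rw [List.getLast?_eq_getElem?, show p.length - 1 = n by omega]
    exact List.getElem?_eq_getElem hn

lemma LPath.not_output_get {p : List (B.State × Fin k)} {t : B.State} (hp : B.LPath p t)
    (n : ℕ) (hn : n < p.length) : ¬ B.IsOutput (p.get ⟨n, hn⟩).1 := by
  rintro ⟨a, ha⟩
  have e := hp.edges_stateOf n hn
  rw [← ha] at e
  exact B.out_sink _ _ _ e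

lemma LPath.stateOf_zero {p : List (B.State × Fin k)} {t : B.State} (hp : B.LPath p t) :
    stateOf B p t 0 = B.start := by
  cases p with
  | nil => simpa [stateOf] using hp.2.2
  | cons a l =>
      have h0 := hp.2.2
      simp only [List.head?_cons, Option.map_some, Option.getD_some] at h0
      simpa [stateOf] using h0

lemma comp_agree (hdet : B.Deterministic) {I : TEPInput h k} {q p' : List (B.State × Fin k)}
    {s t' : B.State} (hq : B.CompPath I q s) (hp' : B.CompPath I p' t') :
    ∀ n, n ≤ q.length → n ≤ p'.length → stateOf B q s n = stateOf B p' t' n := by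
  intro n
  induction n with
  | zero => intro _ _; rw [hq.1.stateOf_zero, hp'.1.stateOf_zero]
  | succ n ih =>
      intro h1 h2
      have hn1 : n < q.length := by omega
      have hn2 : n < p'.length := by omega
      have hu := ih (by omega) (by omega)
      rw [stateOf_lt hn1, stateOf_lt hn2] at hu
      have e1 := hq.1.edges_stateOf n hn1
      have e2 := hp'.1.edges_stateOf n hn2
      have l1 : (q.get ⟨n, hn1⟩).2 = queryVal I (B.query (q.get ⟨n, hn1⟩).1) :=
        hq.2 _ (List.get_mem q ⟨n, hn1⟩)
      have l2 : (p'.get ⟨n, hn2⟩).2 = queryVal I (B.query (p'.get ⟨n, hn2⟩).1) :=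
        hp'.2 _ (List.get_mem p' ⟨n, hn2⟩)
      have hno : ¬ B.IsOutput (q.get ⟨n, hn1⟩).1 := hq.1.not_output_get n hn1
      obtain ⟨u, -, huniq⟩ := hdet _ hno (queryVal I (B.query (q.get ⟨n, hn1⟩).1))
      rw [l1] at e1
      rw [l2, ← hu] at e2
      rw [huniq _ e1, huniq _ e2]

lemma lpath_take {p : List (B.State × Fin k)} {t : B.State} (hp : B.LPath p t)
    (m : ℕ) (hm : m < p.length) :
    B.LPath (p.take m) (p.get ⟨m, hm⟩).1 := by
  have hlen : (p.take m).length = m := by rw [List.length_take]; omega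
  have hstart : (p.get ⟨0, by omega⟩).1 = B.start := by
    have h0 := hp.stateOf_zero
    rwa [stateOf_lt (by omega : 0 < p.length)] at h0
  refine ⟨hp.1.take m, ?_, ?_⟩
  · intro x hx
    rcases Nat.eq_zero_or_pos m with rfl | hm0
    · simp at hx
    obtain ⟨n, rfl⟩ : ∃ n, m = n + 1 := ⟨m - 1, by omega⟩
    rw [List.getLast?_eq_getElem?, hlen] at hx
    simp only [Nat.add_sub_cancel] at hx
    rw [List.getElem?_take_of_lt (by omega), List.getElem?_eq_getElem (by omega : n < p.length)] at hx
    have hx' : x = p.get ⟨n, by omega⟩ := by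
      injection hx with hx'
      exact hx'.symm
    subst hx'
    exact List.isChain_iff_getElem.mp hp.1 n (by omega)
  · rcases Nat.eq_zero_or_pos m with rfl | hm0
    · simpa using hstart
    · have hh0 : (p.take m).head? = p.head? := by
        rw [List.head?_eq_getElem?, List.head?_eq_getElem?, List.getElem?_take_of_lt (by omega)]
      rw [hh0, List.head?_eq_getElem?, List.getElem?_eq_getElem (by omega : 0 < p.length)]
      simpa using hstart

end BP
/-- Let `B` be a deterministic thrifty branching program solving `TEP^h_2(k)` with
`k ≥ 2`, let `I` be an input and `p` (ending at output state `t`) its complete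
computation path. Then every node `i` of `T^h_2` is queried by some state on the
path; moreover, for every non-root node `i`, some query to `i` occurs strictly
before the first query to the parent `i / 2` of `i`. -/
theorem deterministic_thrifty_queries_every_node (h k : ℕ) (hh : 1 ≤ h) (hk : 2 ≤ k)
    (B : BP h k) (hdet : B.Deterministic) (hsol : B.Solves) (hthr : B.Thrifty)
    (I : TEPInput h k) (p : List (B.State × Fin k)) (t : B.State)
    (hp : B.CompPath I p t) (ht : B.IsOutput t) :
    ∀ i : ℕ, isNode h i →
      (∃ m : ℕ, ∃ hm : m < p.length, queriesNode (B.query (p.get ⟨m, hm⟩).1) i) ∧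
      (2 ≤ i → ∃ m : ℕ, ∃ hm : m < p.length,
        queriesNode (B.query (p.get ⟨m, hm⟩).1) i ∧
        ∀ (n : ℕ) (hn : n < p.length), n ≤ m →
          ¬ queriesNode (B.query (p.get ⟨n, hn⟩).1) (i / 2)) := by
  classical
  -- queries that do not address `i` have the same answer under the perturbed input
  have hpres : ∀ (i : ℕ), isNode h i → ∀ x ∈ p, ¬ queriesNode (B.query x.1) i →
      x.2 = queryVal (perturb h k I i) (B.query x.1) := by
    intro i hi x hx hni
    obtain ⟨⟨n, hn⟩, rfl⟩ := List.mem_iff_get.mp hx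
    rw [queryVal_perturb hh I hi _ (B.query_wf _ (hp.1.not_output_get n hn)) hni
      (fun j xa ya hq => hthr I p t hp ht _ hx j xa ya hq)]
    exact hp.2 _ hx
  -- Part 1: every node is queried somewhere on the path
  have part1 : ∀ (i : ℕ), isNode h i →
      ∃ m : ℕ, ∃ hm : m < p.length, queriesNode (B.query (p.get ⟨m, hm⟩).1) i := by
    intro i hi
    by_contra hno
    push_neg at hno
    have hnone : ∀ x ∈ p, ¬ queriesNode (B.query x.1) i := by
      intro x hx
      obtain ⟨⟨n, hn⟩, rfl⟩ := List.mem_iff_get.mp hx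
      exact hno n hn
    have hcomp' : B.CompPath (perturb h k I i) p t :=
      ⟨hp.1, fun x hx => hpres i hi x hx (hnone x hx)⟩
    have h1 := (hsol I).2 p t hp ht
    have h2 := (hsol (perturb h k I i)).2 p t hcomp' ht
    exact nodeVal_perturb_root hh hk I hi (B.out_inj (h2.symm.trans h1))
  intro i hi
  refine ⟨part1 i hi, fun hi2 => ?_⟩
  by_contra hno
  push_neg at hno
  have hpar : isNode h (i / 2) := ⟨by omega, by have := hi.2; omega⟩
  obtain ⟨m₀, hm₀, hq₀⟩ := part1 (i / 2) hpar
  have hex : ∃ m, ∃ hm : m < p.length, queriesNode (B.query (p.get ⟨m, hm⟩).1) (i / 2) :=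
    ⟨m₀, hm₀, hq₀⟩
  obtain ⟨hm1, hq1⟩ := Nat.find_spec hex
  set m1 := Nat.find hex with hm1def
  have hmin : ∀ n, n < m1 → ∀ hn : n < p.length,
      ¬ queriesNode (B.query (p.get ⟨n, hn⟩).1) (i / 2) := by
    intro n hn hn' hqn
    exact Nat.find_min hex hn ⟨hn', hqn⟩
  have hnoi : ∀ n (hn : n < p.length), n < m1 → ¬ queriesNode (B.query (p.get ⟨n, hn⟩).1) i := by
    intro n hn hlt hqn
    obtain ⟨n', hn', hle, hq'⟩ := hno n hn hqn
    exact hmin n' (by omega) hn' hq'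
  have hlen : (p.take m1).length = m1 := by rw [List.length_take]; omega
  -- the prefix of `p` before the first parent-query is a computation path of the
  -- perturbed input
  have hqpath : B.CompPath (perturb h k I i) (p.take m1) (p.get ⟨m1, hm1⟩).1 := by
    refine ⟨BP.lpath_take hp.1 m1 hm1, ?_⟩
    intro x hx
    have hxp : x ∈ p := List.mem_of_mem_take hx
    obtain ⟨⟨n, hn⟩, rfl⟩ := List.mem_iff_get.mp hx
    have hnp : n < p.length := by omega
    have hgp : (p.take m1).get ⟨n, hn⟩ = p.get ⟨n, hnp⟩ := List.getElem_take
    apply hpres i hi _ hxp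
    rw [hgp]
    exact hnoi n hnp (by omega)
  obtain ⟨p', t', hp', ht'⟩ := (hsol (perturb h k I i)).1
  -- the complete computation path of the perturbed input extends the prefix
  have hm1p' : m1 < p'.length := by
    by_contra hge
    push_neg at hge
    have hag := BP.comp_agree hdet hqpath hp' p'.length (by omega) (le_refl _)
    rw [BP.stateOf_ge (lt_irrefl _)] at hag
    by_cases hc : p'.length < (p.take m1).length
    · have hno2 := hqpath.1.not_output_get _ hc
      rw [BP.stateOf_lt hc] at hag
      rw [hag] at hno2
      exact hno2 ht'
    · have hno2 := hp.1.not_output_get m1 hm1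
      rw [BP.stateOf_ge hc] at hag
      rw [hag] at hno2
      exact hno2 ht'
  have hagree := BP.comp_agree hdet hqpath hp' m1 (by omega) (by omega)
  rw [BP.stateOf_ge (by omega), BP.stateOf_lt hm1p'] at hagree
  -- the first parent-query is an internal query to `i / 2`
  have hwf1 := B.query_wf _ (hp.1.not_output_get m1 hm1)
  obtain ⟨x, y, hqeq⟩ : ∃ x y, B.query (p.get ⟨m1, hm1⟩).1 = BPQuery.internal (i / 2) x y := by
    cases hqc : B.query (p.get ⟨m1, hm1⟩).1 with
    | leaf j =>
        exfalso
        rw [hqc] at hq1 hwf1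
        have hj1 : j = i / 2 := hq1
        have hj2 : 2 ^ (h - 1) ≤ j := hwf1.1
        have hpow : 2 ^ h = 2 * 2 ^ (h - 1) := by
          conv_lhs => rw [show h = h - 1 + 1 by omega]
          rw [pow_succ']
        have := hi.2
        omega
    | internal j xa ya =>
        rw [hqc] at hq1
        have hj1 : j = i / 2 := hq1
        exact ⟨xa, ya, by rw [hj1]⟩
  -- thriftiness under both inputs contradicts the change of `v_i`
  have hthrI := hthr I p t hp ht _ (List.get_mem p ⟨m1, hm1⟩) (i / 2) x y hqeq
  have hqeq' : B.query (p'.get ⟨m1, hm1p'⟩).1 = BPQuery.internal (i / 2) x y := by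
    rw [← hagree]; exact hqeq
  have hthrP := hthr (perturb h k I i) p' t' hp' ht' _ (List.get_mem p' ⟨m1, hm1p'⟩) (i / 2) x y hqeq'
  have hne := nodeVal_perturb_anc hh hk I hi 0 (by simpa using hi.1)
  rw [pow_zero, Nat.div_one] at hne
  rcases Nat.mod_two_eq_zero_or_one i with hpar2 | hpar2
  · have hieq : 2 * (i / 2) = i := by omega
    rw [hieq] at hthrI hthrP
    exact hne (hthrP.1.symm.trans hthrI.1)
  · have hieq : 2 * (i / 2) + 1 = i := by omega
    rw [hieq] at hthrI hthrP
    exact hne (hthrP.2.symm.trans hthrI.2)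
end

section
/- Let B be a syntactic read-once (non-deterministic) branching program, let C(I) and C(J) be complete computation paths of inputs I and J that both contain the state γ. Then there exists an input K for which the path obtained by concatenating C_0(I,γ) (the segment of C(I) up to and including the edge entering γ) with C_1(J,γ) (the segment of C(J) from γ onward) is a complete computation path of K. -/
lemma lpath_mem_edge {h k : ℕ} {B : BP h k} {p : List (B.State × Fin k)} {t : B.State}
    (hp : B.LPath p t) : ∀ x ∈ p, ∃ y, B.edges x.1 x.2 y := by
  intro x hx
  obtain ⟨s, u, rfl⟩ := List.append_of_mem hx
  obtain ⟨hc, hl, -⟩ := hp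
  cases u with
  | nil =>
    refine ⟨t, hl x ?_⟩
    rw [List.getLast?_append_cons]; rfl
  | cons y ys =>
    have hsuf : List.Chain' (fun a b => B.edges a.1 a.2 b.1) (x :: y :: ys) :=
      hc.suffix ⟨s, rfl⟩
    exact ⟨y.1, (List.isChain_cons_cons.mp hsuf).1⟩

/-- Composability for syntactic read-once branching programs: if `p₁ ++ p₂`
(ending at output `tI`) is a complete computation path of input `I` and
`q₁ ++ q₂` (ending at output `tJ`) is a complete computation path of input `J`,
and both paths pass through the state `γ` at the indicated splitting points
(the first state of `p₂`, resp. `q₂`, is `γ`, these segments being empty when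
`γ` is the final state), then there is an input `K` for which the concatenation
`p₁ ++ q₂` of `C_0(I,γ)` and `C_1(J,γ)` is a complete computation path. -/
theorem syntactic_readonce_composability (h k : ℕ) (B : BP h k)
    (hro : B.SyntacticReadOnce) (I J : TEPInput h k)
    (p₁ p₂ q₁ q₂ : List (B.State × Fin k)) (tI tJ γ : B.State)
    (hI : B.CompPath I (p₁ ++ p₂) tI) (htI : B.IsOutput tI)
    (hJ : B.CompPath J (q₁ ++ q₂) tJ) (htJ : B.IsOutput tJ)
    (hγI : (p₂.head?.map Prod.fst).getD tI = γ)
    (hγJ : (q₂.head?.map Prod.fst).getD tJ = γ) :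
    ∃ K : TEPInput h k, B.CompPath K (p₁ ++ q₂) tJ ∧ B.IsOutput tJ := by
  classical
  obtain ⟨⟨hcI, hlastI, hheadI⟩, -⟩ := hI
  obtain ⟨⟨hcJ, hlastJ, hheadJ⟩, -⟩ := hJ
  obtain ⟨hcI1, hcI2, hconnI⟩ := List.isChain_append.mp hcI
  obtain ⟨hcJ1, hcJ2, hconnJ⟩ := List.isChain_append.mp hcJ
  -- the edge leaving the last state of p₁ enters γ
  have hstepγ : ∀ x, p₁.getLast? = some x → B.edges x.1 x.2 γ := by
    intro x hx
    cases p₂ with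
    | nil =>
      have htIγ : tI = γ := by simpa using hγI
      rw [List.append_nil] at hlastI
      exact htIγ ▸ hlastI x hx
    | cons y ys =>
      have hyγ : y.1 = γ := by simpa using hγI
      exact hyγ ▸ hconnI x hx y rfl
  have hheadq₂ : ∀ y ∈ q₂.head?, y.1 = γ := by
    intro y hy
    cases q₂ with
    | nil => simp at hy
    | cons z zs =>
      have : y = z := by simpa using hy.symm
      subst this
      simpa using hγJ
  -- the concatenation is a path from the start state to tJ
  have hL : B.LPath (p₁ ++ q₂) tJ := by
    refine ⟨?_, ?_, ?_⟩
    · apply List.isChain_append.mpr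
      refine ⟨hcI1, hcJ2, ?_⟩
      intro x hx y hy
      exact (hheadq₂ y hy) ▸ hstepγ x hx
    · intro x hx
      cases q₂ with
      | nil =>
        rw [List.append_nil] at hx
        have htJγ : tJ = γ := by simpa using hγJ
        exact htJγ ▸ hstepγ x hx
      | cons z zs =>
        apply hlastJ
        rw [List.getLast?_append_cons] at hx ⊢
        exact hx
    · cases p₁ with
      | nil =>
        simp only [List.nil_append]
        have h1 : ((p₂.head?.map Prod.fst).getD tI) = B.start := by simpa using hheadI
        rw [hγJ, ← hγI]
        exact h1
      | cons z zs =>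
        simp only [List.cons_append, List.head?_cons, Option.map_some, Option.getD_some] at hheadI ⊢
        exact hheadI
  have hnd := hro _ _ hL htJ
  have hinj := List.inj_on_of_nodup_map hnd
  have hedge := lpath_mem_edge hL
  have hwf : ∀ x ∈ p₁ ++ q₂, queryWF h (B.query x.1) := by
    intro x hx
    apply B.query_wf
    rintro ⟨a, ha⟩
    obtain ⟨y, hy⟩ := hedge x hx
    exact B.out_sink a x.2 y (by rw [ha]; exact hy)
  have h2 : 2 ^ h ≤ 2 * 2 ^ (h - 1) := by
    rcases Nat.eq_zero_or_pos h with rfl | hh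
    · norm_num
    · have e : 2 ^ h = 2 ^ (h - 1) * 2 := by rw [← pow_succ, Nat.sub_add_cancel hh]
      rw [e]; omega
  refine ⟨(fun j => if hx : ∃ x, x ∈ p₁ ++ q₂ ∧
            B.query x.1 = BPQuery.leaf (2 ^ (h - 1) + j.val) then hx.choose.2 else I.1 j,
          fun j a b => if hx : ∃ x, x ∈ p₁ ++ q₂ ∧
            B.query x.1 = BPQuery.internal (j.val + 1) a b then hx.choose.2 else I.2 j a b),
        ⟨hL, ?_⟩, htJ⟩
  intro x hx
  cases hq : B.query x.1 with
  | leaf i =>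
    have hwfx := hwf x hx
    rw [hq] at hwfx
    obtain ⟨hi1, hi2⟩ := hwfx
    have hlt : i - 2 ^ (h - 1) < 2 ^ (h - 1) := by omega
    simp only [queryVal, leafValAt]
    have hNi : 2 ^ (h - 1) + (i - 2 ^ (h - 1)) % 2 ^ (h - 1) = i := by
      rw [Nat.mod_eq_of_lt hlt]; omega
    have hexists : ∃ x', x' ∈ p₁ ++ q₂ ∧
        B.query x'.1 = BPQuery.leaf (2 ^ (h - 1) + (i - 2 ^ (h - 1)) % 2 ^ (h - 1)) :=
      ⟨x, hx, by rw [hq, hNi]⟩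
    rw [dif_pos hexists]
    obtain ⟨hmem', hq'⟩ := hexists.choose_spec
    exact (congrArg Prod.snd (hinj hmem' hx (by rw [hq', hq, hNi]))).symm
  | internal i a b =>
    have hwfx := hwf x hx
    rw [hq] at hwfx
    obtain ⟨hi1, hi2⟩ := hwfx
    have hlt : i - 1 < 2 ^ (h - 1) - 1 := by omega
    simp only [queryVal, funcAt, dif_pos hlt]
    have hNi : (i - 1) + 1 = i := by omega
    have hexists : ∃ x', x' ∈ p₁ ++ q₂ ∧
        B.query x'.1 = BPQuery.internal ((i - 1) + 1) a b :=
      ⟨x, hx, by rw [hq, hNi]⟩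
    rw [dif_pos hexists]
    obtain ⟨hmem', hq'⟩ := hexists.choose_spec
    exact (congrArg Prod.snd (hinj hmem' hx (by rw [hq', hq, hNi]))).symm
end

section
/- Let B be a branching program solving TEP^h_2(k) and let γ be a state of B. Then the number of inputs I that have a complete computation path passing through γ is at most (∏_{i=1}^{2^h−1} |A_γ(i)|) · k^{N − (2^h − 1)}, where N = 2^{h−1} + (2^{h−1} − 1)k² is the total number of [k]-entries of an input. Equivalently, at most a fraction (∏_{i=1}^{2^h−1} |A_γ(i)|)/k^{2^h−1} of all k^N inputs have a complete computation path through γ. -/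
section CountAux

variable {h k : ℕ}

/-- The value of input `I` at leaf `2^(h-1) + j` is the `j`-th leaf entry. -/
lemma nodeVal_leaf_aux (I : TEPInput h k) (j : ℕ) (hj : j < 2 ^ (h - 1)) :
    nodeVal h k I (2 ^ (h - 1) + j) = I.1 ⟨j, hj⟩ := by
  rw [nodeVal, dif_neg (by omega)]
  unfold leafValAt
  congr 1
  exact Fin.ext (by simp [Nat.add_sub_cancel_left, Nat.mod_eq_of_lt hj])

/-- The thrifty value of the function at internal node `j+1` is the node value. -/
lemma nodeVal_internal_aux (I : TEPInput h k) (j : Fin (2 ^ (h - 1) - 1)) :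
    I.2 j (nodeVal h k I (2 * ((j : ℕ) + 1))) (nodeVal h k I (2 * ((j : ℕ) + 1) + 1)) =
      nodeVal h k I ((j : ℕ) + 1) := by
  conv_rhs => rw [nodeVal]
  rw [dif_pos ⟨by omega, by have := j.2; omega⟩]
  unfold funcAt
  rw [dif_pos (by have := j.2; omega)]
  rfl

end CountAux

/-- Counting bound: for a branching program `B` solving `TEP^h_2(k)` and a state
`γ`, the number of inputs having a complete computation path through `γ` is at
most `(∏_{i=1}^{2^h−1} |A_γ(i)|) · k^(N − (2^h−1))`, where
`N = 2^(h−1) + (2^(h−1) − 1)·k²` is the number of `[k]`-entries of an input;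
stated multiplicatively (to avoid truncated subtraction) as
`count · k^(2^h−1) ≤ (∏ |A_γ(i)|) · k^N`. -/
theorem count_inputs_through_state (h k : ℕ) (hh : 1 ≤ h) (B : BP h k)
    (hsol : B.Solves) (γ : B.State) :
    Nat.card {I : TEPInput h k // B.CompThrough I γ} * k ^ (2 ^ h - 1) ≤
      (∏ i ∈ Finset.Icc 1 (2 ^ h - 1), (B.Aset γ i).ncard) *
        k ^ (2 ^ (h - 1) + (2 ^ (h - 1) - 1) * k ^ 2) := by
  classical
  have e2 : 2 ^ h = 2 ^ (h - 1) * 2 := by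
    conv_lhs => rw [← Nat.sub_add_cancel hh]
    rw [pow_succ]
  have hL1 : 1 ≤ 2 ^ (h - 1) := Nat.one_le_two_pow
  -- the injection
  set Ψ : ({I : TEPInput h k // B.CompThrough I γ} × (Fin (2 ^ h - 1) → Fin k)) →
      ((∀ i : Fin (2 ^ h - 1), (B.Aset γ ((i : ℕ) + 1))) × TEPInput h k) :=
    fun x =>
      ⟨fun i => ⟨nodeVal h k x.1.1 ((i : ℕ) + 1), x.1.1, x.1.2, rfl⟩,
       ⟨fun j => x.2 ⟨2 ^ (h - 1) + (j : ℕ) - 1, by have := j.2; omega⟩,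
        fun j a b =>
          if a = nodeVal h k x.1.1 (2 * ((j : ℕ) + 1)) ∧
             b = nodeVal h k x.1.1 (2 * ((j : ℕ) + 1) + 1)
          then x.2 ⟨(j : ℕ), by have := j.2; omega⟩ else x.1.1.2 j a b⟩⟩ with hΨ
  have hinj : Function.Injective Ψ := by
    rintro ⟨⟨I, hI⟩, g⟩ ⟨⟨J, hJ⟩, g'⟩ heq
    rw [hΨ, Prod.mk.injEq, Prod.mk.injEq] at heq
    obtain ⟨h1, h2, h3⟩ := heq
    -- all node values agree
    have hv : ∀ i : ℕ, 1 ≤ i → i < 2 ^ h → nodeVal h k I i = nodeVal h k J i := by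
      intro i hi1 hi2
      have := congrArg Subtype.val (congrFun h1 ⟨i - 1, by omega⟩)
      simpa [Nat.sub_add_cancel hi1] using this
    -- leaf entries agree
    have hleaf : I.1 = J.1 := by
      funext j
      have e1 := nodeVal_leaf_aux I (j : ℕ) j.2
      have e1' := nodeVal_leaf_aux J (j : ℕ) j.2
      rw [Fin.eta] at e1 e1'
      rw [← e1, ← e1']
      exact hv _ (by omega) (by have := j.2; omega)
    -- function entries agree
    have hfun : I.2 = J.2 := by
      funext j a b
      have hj2 := j.2
      by_cases hc : a = nodeVal h k I (2 * ((j : ℕ) + 1)) ∧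
          b = nodeVal h k I (2 * ((j : ℕ) + 1) + 1)
      · obtain ⟨ha, hb⟩ := hc
        subst ha hb
        rw [nodeVal_internal_aux I j,
          hv (2 * ((j : ℕ) + 1)) (by omega) (by omega),
          hv (2 * ((j : ℕ) + 1) + 1) (by omega) (by omega),
          nodeVal_internal_aux J j]
        exact hv _ (by omega) (by omega)
      · have := congrFun (congrFun (congrFun h3 j) a) b
        rw [if_neg hc, if_neg (by
          rw [← hv (2 * ((j : ℕ) + 1)) (by omega) (by omega),
            ← hv (2 * ((j : ℕ) + 1) + 1) (by omega) (by omega)]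
          exact hc)] at this
        exact this
    -- extra entries agree
    have hg : g = g' := by
      funext i
      have hi2 := i.2
      rcases lt_or_ge ((i : ℕ)) (2 ^ (h - 1) - 1) with hlt | hge
      · have := congrFun (congrFun (congrFun h3 ⟨(i : ℕ), hlt⟩)
          (nodeVal h k I (2 * ((i : ℕ) + 1)))) (nodeVal h k I (2 * ((i : ℕ) + 1) + 1))
        rw [if_pos ⟨rfl, rfl⟩, if_pos ⟨(hv (2 * ((i : ℕ) + 1)) (by omega) (by omega)),
          (hv (2 * ((i : ℕ) + 1) + 1) (by omega) (by omega))⟩] at this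
        simpa using this
      · have hj2 : (i : ℕ) + 1 - 2 ^ (h - 1) < 2 ^ (h - 1) := by omega
        have := congrFun h2 ⟨(i : ℕ) + 1 - 2 ^ (h - 1), hj2⟩
        simp only [show 2 ^ (h - 1) + ((i : ℕ) + 1 - 2 ^ (h - 1)) - 1 = (i : ℕ) from by omega]
          at this
        simpa using this
    exact Prod.ext (Subtype.ext (Prod.ext hleaf hfun)) hg
  have hcard := Nat.card_le_card_of_injective Ψ hinj
  rw [Nat.card_prod, Nat.card_prod] at hcard
  have hfk : Nat.card (Fin (2 ^ h - 1) → Fin k) = k ^ (2 ^ h - 1) := by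
    rw [Nat.card_fun]; simp
  rw [hfk, Nat.card_pi] at hcard
  -- the product over Fin matches the product over Icc
  have hprod : ∏ i : Fin (2 ^ h - 1), Nat.card (B.Aset γ ((i : ℕ) + 1)) =
      ∏ i ∈ Finset.Icc 1 (2 ^ h - 1), (B.Aset γ i).ncard := by
    rw [Fin.prod_univ_eq_prod_range (fun n => Nat.card (B.Aset γ (n + 1)))]
    rw [show Finset.Icc 1 (2 ^ h - 1) = Finset.Ico 1 (2 ^ h - 1 + 1) from
      (Finset.Ico_add_one_right_eq_Icc _ _).symm]
    rw [Finset.prod_Ico_eq_prod_range]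
    simp only [Nat.add_sub_cancel]
    exact Finset.prod_congr rfl fun x _ => by
      rw [Nat.card_coe_set_eq, Nat.add_comm x 1]
  rw [hprod] at hcard
  -- the cardinality of the input space
  have hTEP : Nat.card (TEPInput h k) = k ^ (2 ^ (h - 1) + (2 ^ (h - 1) - 1) * k ^ 2) := by
    show Nat.card ((Fin (2 ^ (h - 1)) → Fin k) ×
      (Fin (2 ^ (h - 1) - 1) → Fin k → Fin k → Fin k)) = _
    simp only [Nat.card_eq_fintype_card, Fintype.card_prod, Fintype.card_fun, Fintype.card_fin]
    rw [← pow_mul, ← pow_mul, ← pow_add]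
    congr 1
    ring
  rw [hTEP] at hcard
  exact hcard
end
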